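/- arXiv:1901.05367 — 7 statements merged into one kernel-verified Lean document; each statement's English description precedes it below -/
import Mathlib

section
/- For every λ > 0, the median of Z_λ = N_λ + U satisfies −log 2 ≤ Me_{Z_λ} − λ ≤ 4/3. -/
open MeasureTheory ProbabilityTheory Filter Real Set
open scoped ENNReal NNReal

/-- Distribution of `Z_λ = N_λ + U`, `N_λ` Poisson(λ), `U` uniform on `(0,1)`, independent. -/
noncomputable def zMeasure (l : ℝ) : Measure ℝ :=
  Measure.map (fun p : ℝ × ℝ => p.1 + p.2)
    ((Measure.map (Nat.cast : ℕ → ℝ) (poissonMeasure l.toNNReal)).prod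
      (volume.restrict (Set.Ioo (0 : ℝ) 1)))

/-- The median of `Z_λ`: `inf {t : P(Z_λ ≤ t) ≥ 1/2}`. -/
noncomputable def medianZ (l : ℝ) : ℝ :=
  sInf {t : ℝ | (1 : ℝ≥0∞) / 2 ≤ zMeasure l (Set.Iic t)}

/-- The function `H` of the main theorem. -/
noncomputable def Hfun (x : ℝ) : ℝ :=
  if x ≤ 2 / 3 then x ^ 2 * (x - 1) / 3 + 4 / 135
  else x / 3 * (x ^ 2 - 4 * x + 5) - 86 / 135

/-- `w_n(x,k) = P(Z_{n+x} ≤ n + x + 1/3 + k/(n+x))`. -/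
noncomputable def w (n : ℕ) (x k : ℝ) : ℝ :=
  (zMeasure (n + x) (Set.Iic ((n : ℝ) + x + 1 / 3 + k / (n + x)))).toReal

/-- `r_n(x,k) = k/(n+x)`. -/
noncomputable def r (n : ℕ) (x k : ℝ) : ℝ := k / (n + x)

/-- `g_n(u) = e^{-u} u^n`. -/
noncomputable def g (n : ℕ) (u : ℝ) : ℝ := Real.exp (-u) * u ^ n

/-- `c_n(v,x) = ((n+v+x)/(n+1+x))^{n+1} e^{1-v}`. -/
noncomputable def c (n : ℕ) (v x : ℝ) : ℝ :=
  (((n : ℝ) + v + x) / ((n : ℝ) + 1 + x)) ^ (n + 1) * Real.exp (1 - v)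

/-- `Δ_n(x,k) = ((n+1)!/g_{n+1}(n+1+x)) (w_{n+1}(x,k) - w_n(x,k))`. -/
noncomputable def Δfun (n : ℕ) (x k : ℝ) : ℝ :=
  ((n + 1).factorial : ℝ) / g (n + 1) ((n : ℝ) + 1 + x) * (w (n + 1) x k - w n x k)

/-!
Write `p_k(λ) = e^{-λ} λ^k / k!`. For `0 ≤ u ≤ 1` the distribution function of `Z_λ` at
`n + u` is `J(λ, n, u) = ∑_{k<n} p_k(λ) + u p_n(λ)`. Along a diagonal `λ = c + u` its derivative
in `u` is `(1 - u) (1 - n/λ) p_n(λ)`, so `J(c + u, n, u)` lies below its value at `u = 1` when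
`n ≤ c` and above it when `c + 1 ≤ n`; that value is the Poisson distribution function
`P(N_{c+1} ≤ n)`. Since `∑_{k≤n} p_k(a) = (1/n!) ∫_a^∞ e^{-t} t^n dt`, reflecting `t ↦ 2a - t`
about `a ≤ n` and inverting `t ↦ c²/t` about `c ≥ n + 1` give `P(N_a ≤ n) ≥ 1/2 ≥ P(N_c ≤ n)`.
Taking `c = n`, resp. `c = n - 1`, yields `P(Z_λ ≤ λ) ≤ 1/2 ≤ P(Z_λ ≤ λ + 1)`; as the
distribution function of `Z_λ` is strictly increasing on `[0, ∞)`, in fact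
`λ ≤ Me_{Z_λ} ≤ λ + 1`.
-/

-- `poissonPMFReal` with a real rate, so that it can be differentiated in the rate.
noncomputable def poissonTerm (l : ℝ) (k : ℕ) : ℝ := exp (-l) * l ^ k / k.factorial

lemma poissonTerm_nonneg {l : ℝ} (hl : 0 ≤ l) (k : ℕ) : 0 ≤ poissonTerm l k := by
  unfold poissonTerm; positivity

lemma poissonTerm_pos {l : ℝ} (hl : 0 < l) (k : ℕ) : 0 < poissonTerm l k := by
  unfold poissonTerm; positivity

lemma continuous_poissonTerm (k : ℕ) : Continuous (poissonTerm · k) := by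
  unfold poissonTerm; fun_prop

lemma poissonTerm_succ (l : ℝ) (k : ℕ) :
    poissonTerm l (k + 1) = l / (k + 1) * poissonTerm l k := by
  unfold poissonTerm
  rw [Nat.factorial_succ]
  push_cast
  field_simp
  ring

lemma hasDerivAt_poissonTerm {l : ℝ} (hl : 0 < l) (k : ℕ) :
    HasDerivAt (poissonTerm · k) ((k / l - 1) * poissonTerm l k) l := by
  have hexp : HasDerivAt (fun x : ℝ => exp (-x)) (-exp (-l)) l := by
    simpa using (hasDerivAt_neg l).exp
  refine ((hexp.mul (hasDerivAt_pow k l)).div_const (k.factorial : ℝ)).congr_deriv ?_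
  unfold poissonTerm
  rcases k with _ | k
  · simp
  · rw [Nat.add_sub_cancel]
    field_simp
    ring

lemma hasDerivAt_sum_poissonTerm {l : ℝ} (hl : 0 < l) (n : ℕ) :
    HasDerivAt (fun x => ∑ k ∈ Finset.range n, poissonTerm x k)
      (-(n / l * poissonTerm l n)) l := by
  induction n with
  | zero => simpa using hasDerivAt_const l (0 : ℝ)
  | succ n ih =>
    simp only [Finset.sum_range_succ]
    refine (ih.add (hasDerivAt_poissonTerm hl n)).congr_deriv ?_
    rw [poissonTerm_succ]
    field_simp
    push_cast
    ring

noncomputable def jitteredCDF (l : ℝ) (n : ℕ) (u : ℝ) : ℝ :=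
  ∑ k ∈ Finset.range n, poissonTerm l k + u * poissonTerm l n

lemma jitteredCDF_one (l : ℝ) (n : ℕ) :
    jitteredCDF l n 1 = ∑ k ∈ Finset.range (n + 1), poissonTerm l k := by
  rw [jitteredCDF, one_mul, Finset.sum_range_succ]

lemma jitteredCDF_nonneg {l u : ℝ} (hl : 0 ≤ l) (n : ℕ) (hu : 0 ≤ u) :
    0 ≤ jitteredCDF l n u :=
  add_nonneg (Finset.sum_nonneg fun k _ => poissonTerm_nonneg hl k)
    (mul_nonneg hu (poissonTerm_nonneg hl n))

lemma jitteredCDF_lt_jitteredCDF_of_lt {l u v : ℝ} (hl : 0 < l) (n : ℕ) (huv : u < v) :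
    jitteredCDF l n u < jitteredCDF l n v :=
  add_lt_add_right (mul_lt_mul_of_pos_right huv (poissonTerm_pos hl n)) _

lemma jitteredCDF_lt_jitteredCDF_of_nat_lt {l u v : ℝ} {m n : ℕ} (hl : 0 < l) (hu : u < 1)
    (hv : 0 ≤ v) (hmn : m < n) : jitteredCDF l m u < jitteredCDF l n v :=
  calc jitteredCDF l m u < jitteredCDF l m 1 := jitteredCDF_lt_jitteredCDF_of_lt hl m hu
    _ = ∑ k ∈ Finset.range (m + 1), poissonTerm l k := jitteredCDF_one l m
    _ ≤ ∑ k ∈ Finset.range n, poissonTerm l k :=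
      Finset.sum_le_sum_of_subset_of_nonneg (Finset.range_subset_range.2 hmn)
        fun k _ _ => poissonTerm_nonneg hl.le k
    _ ≤ jitteredCDF l n v :=
      le_add_of_nonneg_right (mul_nonneg hv (poissonTerm_nonneg hl.le n))

lemma continuous_jitteredCDF_diagonal (c : ℝ) (n : ℕ) :
    Continuous (fun v => jitteredCDF (c + v) n v) := by
  unfold jitteredCDF poissonTerm
  fun_prop

lemma hasDerivAt_jitteredCDF_diagonal {c v : ℝ} (hv : 0 < c + v) (n : ℕ) :
    HasDerivAt (fun v => jitteredCDF (c + v) n v)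
      ((1 - v) * (1 - n / (c + v)) * poissonTerm (c + v) n) v := by
  have hshift : HasDerivAt (fun v : ℝ => c + v) 1 v := by
    simpa using (hasDerivAt_id v).const_add c
  have hsum := (hasDerivAt_sum_poissonTerm hv n).comp v hshift
  have hterm := (hasDerivAt_poissonTerm hv n).comp v hshift
  refine (hsum.add ((hasDerivAt_id v).mul hterm)).congr_deriv ?_
  simp only [Function.comp_apply, id]
  ring

lemma jitteredCDF_diagonal_le {c u : ℝ} {n : ℕ} (hn : (n : ℝ) ≤ c) (hu₀ : 0 ≤ u)
    (hu₁ : u ≤ 1) : jitteredCDF (c + u) n u ≤ jitteredCDF (c + 1) n 1 := by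
  have hc : 0 ≤ c := (Nat.cast_nonneg n).trans hn
  refine monotoneOn_of_hasDerivWithinAt_nonneg
    (f' := fun v => (1 - v) * (1 - n / (c + v)) * poissonTerm (c + v) n) (convex_Icc u 1)
    (continuous_jitteredCDF_diagonal c n).continuousOn (fun v hv => ?_) (fun v hv => ?_)
    (left_mem_Icc.2 hu₁) (right_mem_Icc.2 hu₁) hu₁
  all_goals rw [interior_Icc] at hv; have hv' : 0 < c + v := by linarith [hv.1]
  · exact (hasDerivAt_jitteredCDF_diagonal hv' n).hasDerivWithinAt
  · have : n / (c + v) ≤ 1 := (div_le_one hv').2 (by linarith [hv.1])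
    exact mul_nonneg (mul_nonneg (by linarith [hv.2]) (by linarith)) (poissonTerm_nonneg hv'.le n)

lemma jitteredCDF_diagonal_ge {c u : ℝ} {n : ℕ} (hn : c + 1 ≤ n) (hu : 0 < c + u)
    (hu₁ : u ≤ 1) : jitteredCDF (c + 1) n 1 ≤ jitteredCDF (c + u) n u := by
  refine antitoneOn_of_hasDerivWithinAt_nonpos
    (f' := fun v => (1 - v) * (1 - n / (c + v)) * poissonTerm (c + v) n) (convex_Icc u 1)
    (continuous_jitteredCDF_diagonal c n).continuousOn (fun v hv => ?_) (fun v hv => ?_)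
    (left_mem_Icc.2 hu₁) (right_mem_Icc.2 hu₁) hu₁
  all_goals rw [interior_Icc] at hv; have hv' : 0 < c + v := by linarith [hv.1]
  · exact (hasDerivAt_jitteredCDF_diagonal hv' n).hasDerivWithinAt
  · have : 1 ≤ n / (c + v) := (one_le_div hv').2 (by linarith [hv.2])
    exact mul_nonpos_of_nonpos_of_nonneg
      (mul_nonpos_of_nonneg_of_nonpos (by linarith [hv.2]) (by linarith))
      (poissonTerm_nonneg hv'.le n)

lemma integrableOn_g_Ioi (n : ℕ) {l : ℝ} (hl : 0 ≤ l) : IntegrableOn (g n) (Ioi l) := by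
  have hGamma := GammaIntegral_convergent (s := n + 1) (by positivity)
  simp only [add_sub_cancel_right, rpow_natCast] at hGamma
  exact hGamma.mono_set (Ioi_subset_Ioi hl)

lemma tendsto_poissonTerm_atTop (k : ℕ) : Tendsto (poissonTerm · k) atTop (nhds 0) := by
  simpa [poissonTerm, mul_comm] using
    (tendsto_pow_mul_exp_neg_atTop_nhds_zero k).div_const (k.factorial : ℝ)

lemma integral_Ioi_g (n : ℕ) {l : ℝ} (hl : 0 ≤ l) :
    ∫ t in Ioi l, g n t = n.factorial * ∑ k ∈ Finset.range (n + 1), poissonTerm l k := by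
  have hderiv : ∀ x ∈ Ioi l, HasDerivAt
      (fun x => -(n.factorial * ∑ k ∈ Finset.range (n + 1), poissonTerm x k)) (g n x) x := by
    intro x hx
    have hx : 0 < x := hl.trans_lt hx
    refine ((hasDerivAt_sum_poissonTerm hx (n + 1)).const_mul _).neg.congr_deriv ?_
    unfold g poissonTerm
    rw [Nat.factorial_succ]
    push_cast
    field_simp
    ring
  have hlim : Tendsto (fun x => -(n.factorial * ∑ k ∈ Finset.range (n + 1), poissonTerm x k))
      atTop (nhds 0) := by
    simpa using ((tendsto_finsetSum _ fun k _ => tendsto_poissonTerm_atTop k).const_mul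
      (n.factorial : ℝ)).neg
  rw [integral_Ioi_of_hasDerivAt_of_tendsto (((continuous_finsetSum _ fun k _ =>
    continuous_poissonTerm k).const_mul _).neg.continuousWithinAt) hderiv
    (integrableOn_g_Ioi n hl) hlim]
  simp

lemma integral_Ioi_zero_g (n : ℕ) : ∫ t in Ioi 0, g n t = n.factorial := by
  rw [integral_Ioi_g n le_rfl, Finset.sum_eq_single 0 (fun k _ hk => by simp [poissonTerm, hk])
    (by simp)]
  simp [poissonTerm]

lemma two_mul_le_log_sub_log {x : ℝ} (hx₀ : 0 ≤ x) (hx₁ : x < 1) :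
    2 * x ≤ log (1 + x) - log (1 - x) := by
  have hsum := hasSum_log_sub_log_of_abs_lt_one (by rwa [abs_of_nonneg hx₀])
  simpa using le_hasSum hsum 0 fun j _ => by positivity

lemma log_le_half_sub_inv {x : ℝ} (hx : 1 ≤ x) : log x ≤ (x - x⁻¹) / 2 := by
  have h := self_le_sinh_iff.2 (log_nonneg hx)
  rwa [sinh_eq, exp_neg, exp_log (by linarith)] at h

lemma continuous_g (n : ℕ) : Continuous (g n) := by
  unfold g; fun_prop

lemma g_pos (n : ℕ) {x : ℝ} (hx : 0 < x) : 0 < g n x := by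
  unfold g; positivity

lemma log_g (n : ℕ) {x : ℝ} (hx : 0 < x) : log (g n x) = n * log x - x := by
  rw [g, log_mul (exp_pos _).ne' (pow_pos hx n).ne', log_exp, log_pow]
  ring

-- In logarithms: `2s ≤ 2ns/a ≤ n log((a + s)/(a - s))`.
lemma g_sub_le_g_add {n : ℕ} {a s : ℝ} (hs : 0 ≤ s) (hsa : s < a) (han : a ≤ n) :
    g n (a - s) ≤ g n (a + s) := by
  have ha : 0 < a := hs.trans_lt hsa
  rw [← log_le_log_iff (g_pos n (by linarith)) (g_pos n (by linarith)),
    log_g n (by linarith), log_g n (by linarith)]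
  have hlog : 2 * (s / a) ≤ log (a + s) - log (a - s) := by
    have h := two_mul_le_log_sub_log (div_nonneg hs ha.le) ((div_lt_one ha).2 hsa)
    rwa [one_add_div ha.ne', one_sub_div ha.ne', log_div (by linarith) ha.ne',
      log_div (by linarith) ha.ne', sub_sub_sub_cancel_right] at h
  have : 2 * s ≤ n * (log (a + s) - log (a - s)) :=
    calc 2 * s = a * (2 * (s / a)) := by field_simp
      _ ≤ n * (2 * (s / a)) := by gcongr
      _ ≤ n * (log (a + s) - log (a - s)) := by gcongr
  linarith

lemma integral_Ioc_zero_g_le_integral_Ioi {n : ℕ} {a : ℝ} (ha : 0 < a) (han : a ≤ n) :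
    ∫ t in Ioc 0 a, g n t ≤ ∫ t in Ioi a, g n t := by
  calc ∫ t in Ioc 0 a, g n t
      ≤ ∫ t in Ioc 0 a, g n (2 * a - t) := by
        refine setIntegral_mono_on (continuous_g n).integrableOn_Ioc
          ((continuous_g n).comp (continuous_const.sub continuous_id)).integrableOn_Ioc
          measurableSet_Ioc fun t ht => ?_
        simpa [show 2 * a - t = a + (a - t) by ring] using
          g_sub_le_g_add (s := a - t) (by linarith [ht.2]) (by linarith [ht.1]) han
    _ = ∫ t in Ioc a (2 * a), g n t := by
        rw [← intervalIntegral.integral_of_le ha.le,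
          ← intervalIntegral.integral_of_le (by linarith), intervalIntegral.integral_comp_sub_left]
        norm_num [two_mul]
    _ ≤ ∫ t in Ioi a, g n t :=
        setIntegral_mono_set (integrableOn_g_Ioi n ha.le)
          ((ae_restrict_iff' measurableSet_Ioi).2 (ae_of_all _ fun t ht =>
            (g_pos n (ha.trans ht)).le)) Ioc_subset_Ioi_self.eventuallyLE

lemma integral_Ioc_zero_g_add_integral_Ioi_g (n : ℕ) {a : ℝ} (ha : 0 ≤ a) :
    (∫ t in Ioc 0 a, g n t) + ∫ t in Ioi a, g n t = n.factorial := by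
  rw [← integral_Ioi_zero_g n, ← setIntegral_union (Ioc_disjoint_Ioi le_rfl) measurableSet_Ioi
    (continuous_g n).integrableOn_Ioc (integrableOn_g_Ioi n ha), Ioc_union_Ioi_eq_Ioi ha]

lemma half_le_sum_poissonTerm {n : ℕ} {a : ℝ} (ha : 0 < a) (han : a ≤ n) :
    1 / 2 ≤ ∑ k ∈ Finset.range (n + 1), poissonTerm a k := by
  have hsplit := integral_Ioc_zero_g_add_integral_Ioi_g n ha.le
  have hfact : (0 : ℝ) < n.factorial := by positivity
  have := integral_Ioc_zero_g_le_integral_Ioi ha han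
  rw [integral_Ioi_g n ha.le] at hsplit this
  nlinarith

-- With `x = c / u` this reads `(2n + 2) log x ≤ c (x - x⁻¹)`, and `2 log x ≤ x - x⁻¹`.
lemma sq_div_sq_mul_g_sq_div_le {n : ℕ} {c u : ℝ} (hu : 0 < u) (huc : u < c)
    (hnc : n + 1 ≤ c) : (c / u) ^ 2 * g n (c ^ 2 / u) ≤ g n u := by
  set x := c / u with hx
  have hx₁ : 1 < x := (one_lt_div hu).2 huc
  have hx₀ : 0 < x := one_pos.trans hx₁
  have hcu : c ^ 2 / u = u * x ^ 2 := by rw [hx]; field_simp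
  rw [hcu, ← log_le_log_iff (mul_pos (by positivity) (g_pos n (by positivity))) (g_pos n hu),
    log_mul (by positivity) (g_pos n (by positivity)).ne', log_g n (by positivity),
    log_g n hu, log_mul hu.ne' (by positivity), log_pow]
  have hinv := log_le_half_sub_inv hx₁.le
  have hux : u * x ^ 2 - u = c * (x - x⁻¹) := by
    have hc : c ≠ 0 := (hu.trans huc).ne'
    rw [hx]; field_simp
  have : (n + 1) * (x - x⁻¹) ≤ c * (x - x⁻¹) :=
    mul_le_mul_of_nonneg_right hnc (by linarith [inv_lt_one_of_one_lt₀ hx₁])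
  push_cast
  nlinarith

lemma integral_Ioi_g_le_integral_Ioc_zero {n : ℕ} {c : ℝ} (hnc : n + 1 ≤ c) :
    ∫ t in Ioi c, g n t ≤ ∫ t in Ioc 0 c, g n t := by
  have hc : 0 < c := by linarith [(Nat.cast_nonneg n : (0 : ℝ) ≤ n)]
  have hderiv : ∀ u ∈ Ioo 0 c,
      HasDerivWithinAt (fun u => c ^ 2 / u) (-(c / u) ^ 2) (Ioo 0 c) u := by
    intro u hu
    refine ((hasDerivAt_inv hu.1.ne').const_mul (c ^ 2)).hasDerivWithinAt.congr_deriv ?_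
    ring
  have hinj : InjOn (fun u => c ^ 2 / u) (Ioo 0 c) := fun u hu v hv huv => by
    field_simp [hu.1.ne', hv.1.ne'] at huv
    linarith
  have himage : (fun u => c ^ 2 / u) '' Ioo 0 c = Ioi c := by
    ext t
    refine ⟨?_, fun ht => ⟨c ^ 2 / t, ⟨div_pos (by positivity) (hc.trans ht), ?_⟩, ?_⟩⟩
    · rintro ⟨u, hu, rfl⟩
      exact (lt_div_iff₀ hu.1).2 (by nlinarith [hu.2])
    · exact (div_lt_iff₀ (hc.trans ht)).2 (by nlinarith [mem_Ioi.1 ht])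
    · field_simp
  have hint : IntegrableOn (fun u => |-(c / u) ^ 2| • g n (c ^ 2 / u)) (Ioo 0 c) := by
    rw [← integrableOn_image_iff_integrableOn_abs_deriv_smul measurableSet_Ioo hderiv hinj,
      himage]
    exact integrableOn_g_Ioi n hc.le
  rw [← himage, integral_image_eq_integral_abs_deriv_smul measurableSet_Ioo hderiv hinj,
    integral_Ioc_eq_integral_Ioo]
  refine setIntegral_mono_on hint
    ((continuous_g n).integrableOn_Ioc.mono_set Ioo_subset_Ioc_self) measurableSet_Ioo
    fun u hu => ?_
  rw [smul_eq_mul, abs_neg, abs_of_nonneg (sq_nonneg _)]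
  exact sq_div_sq_mul_g_sq_div_le hu.1 hu.2 hnc

lemma sum_poissonTerm_le_half {n : ℕ} {c : ℝ} (hnc : n + 1 ≤ c) :
    ∑ k ∈ Finset.range (n + 1), poissonTerm c k ≤ 1 / 2 := by
  have hc : 0 < c := by linarith [(Nat.cast_nonneg n : (0 : ℝ) ≤ n)]
  have hsplit := integral_Ioc_zero_g_add_integral_Ioi_g n hc.le
  have hfact : (0 : ℝ) < n.factorial := by positivity
  have := integral_Ioi_g_le_integral_Ioc_zero hnc
  rw [integral_Ioi_g n hc.le] at hsplit this
  nlinarith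

lemma volume_restrict_Ioo_zero_one_Iic (a : ℝ) :
    volume.restrict (Ioo (0 : ℝ) 1) (Iic a) = ENNReal.ofReal (min 1 a) := by
  rw [Measure.restrict_congr_set Ioo_ae_eq_Ioc, Measure.restrict_apply measurableSet_Iic,
    inter_comm, Ioc_inter_Iic, Real.volume_Ioc, sub_zero]

lemma zMeasure_Iic {l : ℝ} (hl : 0 ≤ l) (x : ℝ) :
    zMeasure l (Iic x) =
      ∑' k : ℕ, ENNReal.ofReal (min 1 (x - k)) * ENNReal.ofReal (poissonTerm l k) := by
  have hmeas : MeasurableSet ((fun p : ℝ × ℝ => p.1 + p.2) ⁻¹' Iic x) :=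
    measurableSet_Iic.preimage (by fun_prop)
  rw [zMeasure, Measure.map_apply (by fun_prop) measurableSet_Iic, Measure.prod_apply hmeas,
    lintegral_map (measurable_measure_prodMk_left hmeas) measurable_from_nat,
    lintegral_countable']
  refine tsum_congr fun k => ?_
  have hsection :
      Prod.mk (k : ℝ) ⁻¹' ((fun p : ℝ × ℝ => p.1 + p.2) ⁻¹' Iic x) = Iic (x - k) := by
    ext u
    simp [le_sub_iff_add_le']
  rw [hsection, volume_restrict_Ioo_zero_one_Iic, poissonMeasure_singleton,
    Real.coe_toNNReal _ hl, poissonTerm]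

lemma zMeasure_Iic_natCast_add {l u : ℝ} (hl : 0 ≤ l) (n : ℕ) (hu₀ : 0 ≤ u)
    (hu₁ : u ≤ 1) :
    zMeasure l (Iic (n + u)) = ENNReal.ofReal (jitteredCDF l n u) := by
  have hvanish : ∀ k ∉ Finset.range (n + 1),
      ENNReal.ofReal (min 1 (n + u - k)) * ENNReal.ofReal (poissonTerm l k) = 0 := by
    intro k hk
    have : (n : ℝ) + 1 ≤ k := by exact_mod_cast not_lt.1 (Finset.mem_range.not.1 hk)
    rw [ENNReal.ofReal_of_nonpos (min_le_of_right_le (by linarith)), zero_mul]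
  rw [zMeasure_Iic hl, tsum_eq_sum hvanish, Finset.sum_range_succ, jitteredCDF,
    ENNReal.ofReal_add (Finset.sum_nonneg fun k _ => poissonTerm_nonneg hl k)
      (mul_nonneg hu₀ (poissonTerm_nonneg hl n)),
    ENNReal.ofReal_sum_of_nonneg fun k _ => poissonTerm_nonneg hl k, add_sub_cancel_left,
    min_eq_right hu₁, ENNReal.ofReal_mul hu₀]
  congr 1
  refine Finset.sum_congr rfl fun k hk => ?_
  have : (k : ℝ) + 1 ≤ n := by exact_mod_cast Finset.mem_range.1 hk
  rw [min_eq_left (by linarith), ENNReal.ofReal_one, one_mul]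

lemma exists_eq_natCast_add {x : ℝ} (hx : 0 ≤ x) :
    ∃ (n : ℕ) (u : ℝ), 0 ≤ u ∧ u < 1 ∧ x = n + u :=
  ⟨⌊x⌋₊, x - ⌊x⌋₊, sub_nonneg.2 (Nat.floor_le hx), by linarith [Nat.lt_floor_add_one x],
    by ring⟩

lemma strictMonoOn_zMeasure_Iic {l : ℝ} (hl : 0 < l) :
    StrictMonoOn (fun x => zMeasure l (Iic x)) (Ici 0) := by
  intro s hs t ht hst
  obtain ⟨m, u, hu₀, hu₁, rfl⟩ := exists_eq_natCast_add hs
  obtain ⟨n, v, hv₀, hv₁, rfl⟩ := exists_eq_natCast_add ht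
  simp only
  rw [zMeasure_Iic_natCast_add hl.le m hu₀ hu₁.le,
    zMeasure_Iic_natCast_add hl.le n hv₀ hv₁.le,
    ENNReal.ofReal_lt_ofReal_iff_of_nonneg (jitteredCDF_nonneg hl.le m hu₀)]
  rcases lt_trichotomy m n with hmn | rfl | hnm
  · exact jitteredCDF_lt_jitteredCDF_of_nat_lt hl hu₁ hv₀ hmn
  · exact jitteredCDF_lt_jitteredCDF_of_lt hl m (by linarith)
  · have : (n : ℝ) + 1 ≤ m := by exact_mod_cast hnm
    linarith

lemma half_le_zMeasure_Iic_add_one {l : ℝ} (hl : 0 < l) :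
    (1 : ℝ≥0∞) / 2 ≤ zMeasure l (Iic (l + 1)) := by
  obtain ⟨n, u, hu₀, hu₁, hn⟩ := exists_eq_natCast_add (by linarith : 0 ≤ l + 1)
  have hl' : l = (n - 1 : ℝ) + u := by linarith
  have hdiag := jitteredCDF_diagonal_ge (c := n - 1) (u := u) (n := n) (by linarith)
    (by linarith) hu₁.le
  rw [sub_add_cancel, jitteredCDF_one] at hdiag
  rw [hn, zMeasure_Iic_natCast_add hl.le n hu₀ hu₁.le, hl',
    show (1 : ℝ≥0∞) / 2 = ENNReal.ofReal (1 / 2) by simp]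
  exact ENNReal.ofReal_le_ofReal ((half_le_sum_poissonTerm (by linarith) le_rfl).trans hdiag)

lemma zMeasure_Iic_self_le_half {l : ℝ} (hl : 0 ≤ l) :
    zMeasure l (Iic l) ≤ (1 : ℝ≥0∞) / 2 := by
  obtain ⟨n, u, hu₀, hu₁, rfl⟩ := exists_eq_natCast_add hl
  have hdiag := jitteredCDF_diagonal_le (c := n) le_rfl hu₀ hu₁.le
  rw [jitteredCDF_one] at hdiag
  rw [zMeasure_Iic_natCast_add hl n hu₀ hu₁.le,
    show (1 : ℝ≥0∞) / 2 = ENNReal.ofReal (1 / 2) by simp]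
  exact ENNReal.ofReal_le_ofReal (hdiag.trans (sum_poissonTerm_le_half le_rfl))

lemma le_of_half_le_zMeasure_Iic {l t : ℝ} (hl : 0 < l)
    (ht : (1 : ℝ≥0∞) / 2 ≤ zMeasure l (Iic t)) : l ≤ t := by
  by_contra! htl
  have : zMeasure l (Iic t) < 1 / 2 :=
    calc zMeasure l (Iic t) ≤ zMeasure l (Iic (max t 0)) :=
          measure_mono (Iic_subset_Iic.2 (le_max_left t 0))
      _ < zMeasure l (Iic l) :=
          strictMonoOn_zMeasure_Iic hl (le_max_right t 0) hl.le (max_lt htl hl)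
      _ ≤ 1 / 2 := zMeasure_Iic_self_le_half hl.le
  exact this.not_ge ht

lemma le_medianZ {l : ℝ} (hl : 0 < l) : l ≤ medianZ l :=
  le_csInf ⟨l + 1, half_le_zMeasure_Iic_add_one hl⟩ fun _ => le_of_half_le_zMeasure_Iic hl

lemma medianZ_le_add_one {l : ℝ} (hl : 0 < l) : medianZ l ≤ l + 1 :=
  csInf_le ⟨l, fun _ => le_of_half_le_zMeasure_Iic hl⟩ (half_le_zMeasure_Iic_add_one hl)

theorem median_jittered_poisson_bounds (l : ℝ) (hl : 0 < l) :
    -Real.log 2 ≤ medianZ l - l ∧ medianZ l - l ≤ 4 / 3 := by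
  have h₁ := le_medianZ hl
  have h₂ := medianZ_le_add_one hl
  constructor <;> linarith [log_nonneg one_le_two]
end

section
/- For any fixed x ∈ [0,1) and k ∈ ℝ, the sequence w_n(x,k) = P(Z_{n+x} ≤ n + x + 1/3 + k/(n+x)) converges to 1/2 as n → ∞. -/
open MeasureTheory ProbabilityTheory Filter Real Set
open scoped ENNReal NNReal

/-!
Smoothing by the uniform variable moves the threshold by less than one unit, so `w (n + 1) x k`
is squeezed between `P(N_{n+1+x} ≤ n)` and `P(N_{n+1+x} ≤ n + 3)`. For fixed `y`,
`P(N_{n+y} ≤ n) = 1 - (∫₀^{n+y} tⁿ e⁻ᵗ dt) / n!`, and after the substitution `t = n - √n s` the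
integrand converges to a Gaussian supported on `s > 0`, i.e. on `t < n`. Dominated convergence
gives `√(2π) / 2` for the rescaled integral, and Stirling's formula turns this into `1 / 2`.
-/

open scoped Nat Topology

open Finset in
theorem integral_pow_mul_exp_neg (n : ℕ) (l : ℝ) :
    ∫ t in (0 : ℝ)..l, t ^ n * exp (-t) =
      n ! * (1 - ∑ j ∈ range (n + 1), exp (-l) * l ^ j / j !) := by
  have hexp : ∀ t ∈ uIcc (0 : ℝ) l, HasDerivAt (fun s => -exp (-s)) (exp (-t)) t := fun t _ => by
    simpa using ((hasDerivAt_neg t).exp).fun_neg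
  induction n with
  | zero =>
    rw [intervalIntegral.integral_congr (g := fun t => exp (-t)) (fun t _ => by simp),
      intervalIntegral.integral_eq_sub_of_hasDerivAt hexp
        (continuous_neg.rexp.intervalIntegrable 0 l)]
    simp [sub_eq_neg_add, add_comm]
  | succ n ih =>
    have hpow : ∀ t ∈ uIcc (0 : ℝ) l,
        HasDerivAt (fun s : ℝ => s ^ (n + 1)) ((n + 1 : ℝ) * t ^ n) t := fun t _ => by
      simpa using hasDerivAt_pow (n + 1) t
    have hrec : ∫ t in (0 : ℝ)..l, t ^ (n + 1) * exp (-t) =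
        (n + 1) * (∫ t in (0 : ℝ)..l, t ^ n * exp (-t)) - l ^ (n + 1) * exp (-l) := by
      rw [intervalIntegral.integral_mul_deriv_eq_deriv_mul hpow hexp
        ((by fun_prop : Continuous fun t : ℝ => (n + 1 : ℝ) * t ^ n).intervalIntegrable 0 l)
        (continuous_neg.rexp.intervalIntegrable 0 l)]
      simp only [mul_neg, intervalIntegral.integral_neg, mul_assoc,
        intervalIntegral.integral_const_mul, zero_pow n.succ_ne_zero, zero_mul]
      ring
    rw [hrec, ih, sum_range_succ _ (n + 1), Nat.factorial_succ]
    push_cast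
    field_simp
    ring

lemma poissonMeasure_real_Iic_natCast (r : ℝ≥0) (m : ℕ) :
    (Po(ℝ, r)).real (Iic (m : ℝ)) = ∑ j ∈ Finset.range (m + 1), exp (-r) * r ^ j / j ! := by
  have hpre : (Nat.cast : ℕ → ℝ) ⁻¹' Iic (m : ℝ) = ↑(Finset.range (m + 1)) := by
    ext j; simp
  rw [map_measureReal_apply .of_discrete measurableSet_Iic, hpre,
    ← sum_measureReal_singleton]
  simp_rw [poissonMeasure_real_singleton]

lemma sum_range_two_pow_succ_div (v : ℝ) :
    ∑ i ∈ Finset.range 2, v ^ (i + 1) / (i + 1 : ℝ) = v + v ^ 2 / 2 := by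
  norm_num [Finset.sum_range_succ]

lemma one_sub_mul_exp_le_one (v : ℝ) : (1 - v) * exp v ≤ 1 := by
  calc (1 - v) * exp v ≤ exp (-v) * exp v := by gcongr; exact one_sub_le_exp_neg v
    _ = 1 := by rw [← exp_add, neg_add_cancel, exp_zero]

lemma one_sub_mul_exp_le_exp_neg_sq_div_two {v : ℝ} (h0 : 0 ≤ v) (h1 : v ≤ 1) :
    (1 - v) * exp v ≤ exp (-v ^ 2 / 2) := by
  rcases h1.lt_or_eq with h1 | rfl
  · have hlog : v + v ^ 2 / 2 ≤ -log (1 - v) := by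
      rw [← sum_range_two_pow_succ_div]
      exact sum_le_hasSum (Finset.range 2) (fun i _ => by positivity)
        (hasSum_pow_div_log_of_abs_lt_one (abs_lt.2 ⟨by linarith, h1⟩))
    calc (1 - v) * exp v = exp (log (1 - v) + v) := by rw [exp_add, exp_log (by linarith)]
      _ ≤ exp (-v ^ 2 / 2) := exp_le_exp.2 (by linarith)
  · simp only [sub_self, zero_mul]
    positivity

lemma abs_log_one_sub_add_add_sq_div_two_le {v : ℝ} (hv : |v| ≤ 1 / 2) :
    |log (1 - v) + v + v ^ 2 / 2| ≤ 2 * |v| ^ 3 := by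
  have h := abs_log_sub_add_sum_range_le (hv.trans_lt (by norm_num)) 2
  rw [sum_range_two_pow_succ_div] at h
  calc |log (1 - v) + v + v ^ 2 / 2| = |v + v ^ 2 / 2 + log (1 - v)| := by ring_nf
    _ ≤ |v| ^ 3 / (1 - |v|) := h
    _ ≤ 2 * |v| ^ 3 := by
      rw [div_le_iff₀ (by linarith)]
      nlinarith [pow_nonneg (abs_nonneg v) 3]

lemma natCast_mul_div_sqrt (n : ℕ) (s : ℝ) : (n : ℝ) * (s / √n) = √n * s := by
  rw [mul_div_left_comm, div_sqrt, mul_comm]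

lemma tendsto_sqrt_natCast_atTop : Tendsto (fun n : ℕ => √(n : ℝ)) atTop atTop :=
  tendsto_sqrt_atTop.comp tendsto_natCast_atTop_atTop

/-- `t ^ n * exp (-t)` at `t = n - √n * s`, divided by its maximum `n ^ n * exp (-n)`. -/
noncomputable def laplaceKernel (n : ℕ) (s : ℝ) : ℝ := ((1 - s / √n) * exp (s / √n)) ^ n

lemma integral_pow_mul_exp_neg_eq_integral_laplaceKernel {n : ℕ} (hn : n ≠ 0) (y : ℝ) :
    ∫ t in (0 : ℝ)..(n + y), t ^ n * exp (-t) =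
      √n * (n ^ n * exp (-n)) * ∫ s in (-y / √n)..√n, laplaceKernel n s := by
  have hsqrt : 0 < √(n : ℝ) := sqrt_pos.2 (by positivity)
  have hkernel : ∀ s, (-√n * s + n) ^ n * exp (-(-√n * s + n)) =
      n ^ n * exp (-n) * laplaceKernel n s := fun s => by
    have hbase : (-√n * s + n) ^ n = n ^ n * (1 - s / √n) ^ n := by
      rw [← mul_pow, mul_sub, natCast_mul_div_sqrt]; ring_nf
    have hexp : exp (-(-√n * s + n)) = exp (-n) * exp (s / √n) ^ n := by
      rw [← exp_nat_mul, natCast_mul_div_sqrt, ← exp_add]; ring_nf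
    rw [hbase, hexp, laplaceKernel, mul_pow]
    ring
  have hcov := intervalIntegral.integral_comp_mul_add (fun t => t ^ n * exp (-t))
    (a := -y / √n) (b := √n) (neg_ne_zero.2 hsqrt.ne') n
  rw [show -√n * (-y / √n) + n = n + y by field_simp; ring,
    show -√n * √n + (n : ℝ) = 0 by rw [neg_mul, mul_self_sqrt (Nat.cast_nonneg _)]; ring,
    intervalIntegral.integral_symm 0, smul_eq_mul] at hcov
  simp only [hkernel, intervalIntegral.integral_const_mul] at hcov
  rw [mul_assoc, hcov]
  field_simp

lemma laplaceKernel_nonneg {n : ℕ} {s : ℝ} (hs : s ≤ √n) : 0 ≤ laplaceKernel n s := by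
  have : 0 ≤ 1 - s / √n := sub_nonneg.2 (div_le_one_of_le₀ hs (sqrt_nonneg _))
  unfold laplaceKernel
  positivity

lemma laplaceKernel_le_exp {n : ℕ} (hn : n ≠ 0) {s c : ℝ} (hsc : -c ≤ s) (hs : s ≤ √n) :
    laplaceKernel n s ≤ exp ((c ^ 2 - s ^ 2) / 2) := by
  have hsqrt : 0 < √(n : ℝ) := sqrt_pos.2 (by positivity)
  have hv1 : s / √n ≤ 1 := div_le_one_of_le₀ hs hsqrt.le
  have hbase : 0 ≤ (1 - s / √n) * exp (s / √n) := mul_nonneg (by linarith) (exp_pos _).le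
  rcases le_or_gt 0 s with h0 | h0
  · calc laplaceKernel n s ≤ exp (-(s / √n) ^ 2 / 2) ^ n :=
          pow_le_pow_left₀ hbase (one_sub_mul_exp_le_exp_neg_sq_div_two (by positivity) hv1) n
      _ = exp (-s ^ 2 / 2) := by
          rw [← exp_nat_mul, div_pow, sq_sqrt (Nat.cast_nonneg n)]
          field_simp
      _ ≤ exp ((c ^ 2 - s ^ 2) / 2) := exp_le_exp.2 (by nlinarith [sq_nonneg c])
  · calc laplaceKernel n s ≤ 1 := pow_le_one₀ hbase (one_sub_mul_exp_le_one _)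
      _ ≤ exp ((c ^ 2 - s ^ 2) / 2) := one_le_exp (by nlinarith)

lemma tendsto_laplaceKernel (s : ℝ) :
    Tendsto (fun n : ℕ => laplaceKernel n s) atTop (𝓝 (exp (-s ^ 2 / 2))) := by
  have hv : Tendsto (fun n : ℕ => s / √n) atTop (𝓝 0) :=
    tendsto_const_nhds.div_atTop tendsto_sqrt_natCast_atTop
  have hsmall : ∀ᶠ n : ℕ in atTop, |s / √n| ≤ 1 / 2 :=
    hv.abs.eventually (eventually_le_nhds (by norm_num : |(0 : ℝ)| < 1 / 2))
  have herr : Tendsto (fun n : ℕ => 2 * |s| ^ 3 / √n) atTop (𝓝 0) :=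
    tendsto_const_nhds.div_atTop tendsto_sqrt_natCast_atTop
  have hlog : Tendsto (fun n : ℕ => n * (log (1 - s / √n) + s / √n)) atTop
      (𝓝 (-s ^ 2 / 2)) := by
    rw [tendsto_iff_norm_sub_tendsto_zero]
    refine squeeze_zero' (.of_forall fun _ => norm_nonneg _) ?_ herr
    filter_upwards [eventually_ne_atTop 0, hsmall] with n hn hvn
    have hsqrt : 0 < √(n : ℝ) := sqrt_pos.2 (by positivity)
    have hsq : (n : ℝ) * (s / √n) ^ 2 = s ^ 2 := by
      rw [div_pow, sq_sqrt (Nat.cast_nonneg n)]; field_simp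
    calc ‖n * (log (1 - s / √n) + s / √n) - -s ^ 2 / 2‖
        = |(n : ℝ) * (log (1 - s / √n) + s / √n + (s / √n) ^ 2 / 2)| := by
          rw [Real.norm_eq_abs]; congr 1; linear_combination (-1 / 2 : ℝ) * hsq
      _ ≤ n * (2 * |s / √n| ^ 3) := by
          rw [abs_mul, Nat.abs_cast]
          gcongr
          exact abs_log_one_sub_add_add_sq_div_two_le hvn
      _ = 2 * |s| ^ 3 / √n := by
          rw [abs_div, abs_of_pos hsqrt, div_pow]
          nth_rw 1 [← mul_self_sqrt (Nat.cast_nonneg (α := ℝ) n)]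
          field_simp
  refine ((continuous_exp.tendsto _).comp hlog).congr' ?_
  filter_upwards [hsmall] with n hvn
  have hpos : 0 < 1 - s / √n := by linarith [le_abs_self (s / √n)]
  rw [Function.comp_apply, laplaceKernel, exp_nat_mul, exp_add, exp_log hpos]

lemma tendsto_indicator_laplaceKernel (y : ℝ) {s : ℝ} (hs : s ≠ 0) :
    Tendsto (fun n : ℕ => (Ioc (-y / √n) √n).indicator (laplaceKernel n) s) atTop
      (𝓝 ((Ioi 0).indicator (fun s => exp (-s ^ 2 / 2)) s)) := by
  have hlow : Tendsto (fun n : ℕ => -y / √n) atTop (𝓝 0) :=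
    tendsto_const_nhds.div_atTop tendsto_sqrt_natCast_atTop
  rcases hs.lt_or_gt with hs | hs
  · rw [indicator_of_notMem (notMem_Ioi.2 hs.le)]
    refine tendsto_const_nhds.congr' ?_
    filter_upwards [hlow.eventually (eventually_gt_nhds hs)] with n hn
    exact (indicator_of_notMem (fun h => (h.1.trans hn).false) _).symm
  · rw [indicator_of_mem (mem_Ioi.2 hs)]
    refine (tendsto_laplaceKernel s).congr' ?_
    filter_upwards [hlow.eventually (eventually_lt_nhds hs),
      tendsto_sqrt_natCast_atTop.eventually_ge_atTop s] with n hn hn'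
    exact (indicator_of_mem (show s ∈ Ioc _ _ from ⟨hn, hn'⟩) _).symm

lemma norm_indicator_laplaceKernel_le {n : ℕ} (hn : 1 ≤ n) (y s : ℝ) :
    ‖(Ioc (-y / √n) √n).indicator (laplaceKernel n) s‖ ≤ exp ((|y| ^ 2 - s ^ 2) / 2) := by
  by_cases hs : s ∈ Ioc (-y / √n) √n
  · have hy : -|y| ≤ -y / √n := by
      rw [neg_div, neg_le_neg_iff]
      calc y / √n ≤ |y| / √n := by gcongr; exact le_abs_self y
        _ ≤ |y| := div_le_self (abs_nonneg y) (one_le_sqrt.2 (by exact_mod_cast hn))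
    rw [indicator_of_mem hs, Real.norm_of_nonneg (laplaceKernel_nonneg hs.2)]
    exact laplaceKernel_le_exp (by omega) (hy.trans hs.1.le) hs.2
  · rw [indicator_of_notMem hs, norm_zero]
    positivity

lemma tendsto_integral_laplaceKernel (y : ℝ) :
    Tendsto (fun n : ℕ => ∫ s in (-y / √n)..√n, laplaceKernel n s) atTop
      (𝓝 (√(2 * π) / 2)) := by
  have hint : Integrable (fun s : ℝ => exp ((|y| ^ 2 - s ^ 2) / 2)) := by
    refine ((integrable_exp_neg_mul_sq (b := 1 / 2) (by norm_num)).const_mul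
      (exp (|y| ^ 2 / 2))).congr (.of_forall fun s => ?_)
    dsimp only
    rw [← exp_add]
    ring_nf
  have hdom := tendsto_integral_filter_of_dominated_convergence _
    (.of_forall fun n => ((by unfold laplaceKernel; fun_prop :
      Continuous (laplaceKernel n)).aestronglyMeasurable.indicator measurableSet_Ioc))
    ((eventually_ge_atTop 1).mono fun n hn => .of_forall (norm_indicator_laplaceKernel_le hn y))
    hint ((Measure.ae_ne volume 0).mono fun s => tendsto_indicator_laplaceKernel y)
  have hgauss : ∫ s in Ioi 0, exp (-s ^ 2 / 2) = √(2 * π) / 2 := by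
    convert integral_gaussian_Ioi (1 / 2) using 3 with s
    · ring_nf
    · rw [div_div_eq_mul_div, div_one, mul_comm]
  rw [integral_indicator measurableSet_Ioi, hgauss] at hdom
  refine hdom.congr' ?_
  have hlow : Tendsto (fun n : ℕ => -y / √n) atTop (𝓝 0) :=
    tendsto_const_nhds.div_atTop tendsto_sqrt_natCast_atTop
  filter_upwards [hlow.eventually (eventually_le_nhds one_pos),
    tendsto_sqrt_natCast_atTop.eventually_ge_atTop 1] with n hn hn'
  rw [integral_indicator measurableSet_Ioc, intervalIntegral.integral_of_le (hn.trans hn')]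

theorem tendsto_integral_pow_mul_exp_neg_div_factorial (y : ℝ) :
    Tendsto (fun n : ℕ => (∫ t in (0 : ℝ)..(n + y), t ^ n * exp (-t)) / n !) atTop
      (𝓝 (1 / 2)) := by
  have hstirling : Tendsto (fun n : ℕ => √(2 * n * π) * (n / exp 1) ^ n / n !) atTop (𝓝 1) :=
    (Asymptotics.isEquivalent_iff_tendsto_one (.of_forall fun n => by positivity)).1
      Stirling.factorial_isEquivalent_stirling.symm
  have hlim := hstirling.mul ((tendsto_integral_laplaceKernel y).div_const √(2 * π))
  rw [one_mul, div_div_cancel_left' (by positivity), ← one_div] at hlim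
  refine hlim.congr' ?_
  filter_upwards [eventually_ne_atTop 0] with n hn
  rw [integral_pow_mul_exp_neg_eq_integral_laplaceKernel hn, div_pow, ← exp_nat_mul, mul_one,
    exp_neg, mul_right_comm, sqrt_mul (by positivity)]
  field_simp

theorem tendsto_poissonMeasure_real_Iic_natCast (y : ℝ) :
    Tendsto (fun n : ℕ => (Po(ℝ, (n + y).toNNReal)).real (Iic (n : ℝ))) atTop (𝓝 (1 / 2)) := by
  have hlim := (tendsto_integral_pow_mul_exp_neg_div_factorial y).const_sub 1
  rw [show (1 : ℝ) - 1 / 2 = 1 / 2 by norm_num] at hlim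
  refine hlim.congr' ?_
  filter_upwards [(tendsto_natCast_atTop_atTop.atTop_add tendsto_const_nhds).eventually_ge_atTop
    (-y)] with n hn
  rw [poissonMeasure_real_Iic_natCast, coe_toNNReal _ (by linarith), integral_pow_mul_exp_neg]
  field_simp
  ring

section UniformSmoothing

variable (μ : Measure ℝ) [SFinite μ] (t : ℝ)

lemma map_add_prod_uniform_Iic :
    (μ.prod (volume.restrict (Ioo (0 : ℝ) 1))).map (fun p => p.1 + p.2) (Iic t) =
      (μ.prod volume) ((fun p : ℝ × ℝ => p.1 + p.2) ⁻¹' Iic t ∩ univ ×ˢ Ioo 0 1) := by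
  have hrestrict : μ.prod (volume.restrict (Ioo (0 : ℝ) 1)) =
      (μ.prod volume).restrict (univ ×ˢ Ioo 0 1) := by
    rw [← Measure.prod_restrict, Measure.restrict_univ]
  rw [Measure.map_apply (by fun_prop) measurableSet_Iic, hrestrict,
    Measure.restrict_apply (measurableSet_Iic.preimage (by fun_prop))]

lemma measure_Iic_sub_one_le_map_add_prod_uniform :
    μ (Iic (t - 1)) ≤
      (μ.prod (volume.restrict (Ioo (0 : ℝ) 1))).map (fun p => p.1 + p.2) (Iic t) := by
  rw [map_add_prod_uniform_Iic]
  calc μ (Iic (t - 1)) = (μ.prod volume) (Iic (t - 1) ×ˢ Ioo (0 : ℝ) 1) := by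
        rw [Measure.prod_prod, volume_Ioo]; simp
    _ ≤ _ := measure_mono fun p hp => by
        simp only [mem_inter_iff, mem_preimage, mem_prod, mem_Iic, mem_univ, mem_Ioo,
          true_and] at hp ⊢
        exact ⟨by linarith, hp.2⟩

lemma map_add_prod_uniform_le_measure_Iic :
    (μ.prod (volume.restrict (Ioo (0 : ℝ) 1))).map (fun p => p.1 + p.2) (Iic t) ≤ μ (Iic t) := by
  rw [map_add_prod_uniform_Iic]
  calc _ ≤ (μ.prod volume) (Iic t ×ˢ Ioo (0 : ℝ) 1) := measure_mono fun p hp => by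
        simp only [mem_inter_iff, mem_preimage, mem_prod, mem_Iic, mem_univ, mem_Ioo,
          true_and] at hp ⊢
        exact ⟨by linarith, hp.2⟩
    _ = μ (Iic t) := by rw [Measure.prod_prod, volume_Ioo]; simp

end UniformSmoothing

lemma poissonMeasure_real_Iic_sub_one_le_zMeasure_real (l t : ℝ) :
    (Po(ℝ, l.toNNReal)).real (Iic (t - 1)) ≤ (zMeasure l).real (Iic t) :=
  ENNReal.toReal_mono ((map_add_prod_uniform_le_measure_Iic _ t).trans_lt (measure_lt_top _ _)).ne
    (measure_Iic_sub_one_le_map_add_prod_uniform _ t)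

lemma zMeasure_real_le_poissonMeasure_real_Iic (l t : ℝ) :
    (zMeasure l).real (Iic t) ≤ (Po(ℝ, l.toNNReal)).real (Iic t) :=
  ENNReal.toReal_mono (measure_ne_top _ _) (map_add_prod_uniform_le_measure_Iic _ t)

theorem w_tendsto_half (x k : ℝ) (hx : x ∈ Set.Ico (0 : ℝ) 1) :
    Tendsto (fun n : ℕ => w n x k) atTop (nhds (1 / 2)) := by
  obtain ⟨hx0, hx1⟩ := hx
  rw [← tendsto_add_atTop_iff_nat 1]
  have hr : ∀ᶠ n : ℕ in atTop, k / ((n + 1 : ℕ) + x) ∈ Ioo (-1 / 3 : ℝ) (1 / 3) :=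
    (tendsto_const_nhds.div_atTop ((tendsto_natCast_atTop_atTop.comp
      (tendsto_add_atTop_nat 1)).atTop_add tendsto_const_nhds)).eventually
      (Ioo_mem_nhds (by norm_num) (by norm_num))
  refine tendsto_of_tendsto_of_tendsto_of_le_of_le'
    (tendsto_poissonMeasure_real_Iic_natCast (x + 1))
    ((tendsto_poissonMeasure_real_Iic_natCast (x - 2)).comp (tendsto_add_atTop_nat 3)) ?_ ?_
    <;> filter_upwards [hr] with n hn <;> push_cast at hn <;> rw [w, ← measureReal_def]
  · refine le_trans ?_ (poissonMeasure_real_Iic_sub_one_le_zMeasure_real _ _)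
    rw [show (n : ℝ) + (x + 1) = (n + 1 : ℕ) + x by push_cast; ring]
    exact measureReal_mono (Iic_subset_Iic.2 (by push_cast; linarith [hn.1]))
  · refine (zMeasure_real_le_poissonMeasure_real_Iic _ _).trans ?_
    rw [Function.comp_apply, show ((n + 3 : ℕ) : ℝ) + (x - 2) = (n + 1 : ℕ) + x by push_cast; ring]
    exact measureReal_mono (Iic_subset_Iic.2 (by push_cast; linarith [hn.2]))
end

section
/- (Lemma 1, case (i)) Let k ∈ ℝ, x ∈ [0,1) and n ≥ 1. If x + r_n(x,k) ∈ [−1/3, 2/3), then w_n(x,k) = P(N_{n+x} ≤ n) + (x − 2/3 + k/(n+x))·P(N_{n+x} = n). -/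
open MeasureTheory ProbabilityTheory Filter Real Set
open scoped ENNReal NNReal

/-!
Conditioning on `N_λ = m`, the event `N_λ + U ≤ n + a` with `0 ≤ a < 1` is certain for `m < n`,
has probability `a` for `m = n` and is impossible for `m > n`. Hence
`P(Z_λ ≤ n + a) = P(N_λ < n) + a P(N_λ = n) = P(N_λ ≤ n) + (a - 1) P(N_λ = n)`, and in case (i)
the offset `a = x + 1/3 + r_n(x,k)` lies in `[0, 1)`.
-/

lemma volume_Ioo_zero_one_Iic_natCast_add_sub {a : ℝ} (ha₀ : 0 ≤ a) (ha₁ : a < 1) (n m : ℕ) :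
    volume.restrict (Ioo (0 : ℝ) 1) (Iic (n + a - m))
      = (Iio n).indicator (fun _ => 1) m + ({n} : Set ℕ).indicator (fun _ => ENNReal.ofReal a) m := by
  rw [Measure.restrict_apply measurableSet_Iic]
  rcases lt_trichotomy m n with hmn | rfl | hnm
  · have hle : (m : ℝ) + 1 ≤ n := by exact_mod_cast hmn
    have hsub : Ioo (0 : ℝ) 1 ⊆ Iic (n + a - m) := fun b hb => by
      simp only [mem_Iic]; linarith [hb.2]
    simp [inter_eq_right.2 hsub, hmn, hmn.ne']
  · have hset : Iic a ∩ Ioo 0 1 = Ioc 0 a := by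
      ext b
      simp only [mem_inter_iff, mem_Iic, mem_Ioo, mem_Ioc]
      constructor
      · rintro ⟨hbc, hb₀, -⟩; exact ⟨hb₀, hbc⟩
      · rintro ⟨hb₀, hbc⟩; exact ⟨hbc, hb₀, hbc.trans_lt ha₁⟩
    simp [add_sub_cancel_left, hset]
  · have hle : (n : ℝ) + 1 ≤ m := by exact_mod_cast hnm
    have hempty : Iic ((n : ℝ) + a - m) ∩ Ioo 0 1 = ∅ :=
      eq_empty_of_forall_notMem fun b ⟨hbc, hb₀, _⟩ => by simp only [mem_Iic] at hbc; linarith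
    simp [hempty, hnm.not_gt, hnm.ne']

lemma map_add_prod_volume_Ioo_zero_one_Iic (μ : Measure ℕ) [SFinite μ] (n : ℕ) {a : ℝ}
    (ha₀ : 0 ≤ a) (ha₁ : a < 1) :
    Measure.map (fun p : ℝ × ℝ => p.1 + p.2)
        ((Measure.map (Nat.cast : ℕ → ℝ) μ).prod (volume.restrict (Ioo (0 : ℝ) 1)))
        (Iic (n + a))
      = μ (Iio n) + ENNReal.ofReal a * μ {n} := by
  have hmeas : MeasurableSet ((fun p : ℝ × ℝ => p.1 + p.2) ⁻¹' Iic (n + a)) :=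
    measurable_fst.add measurable_snd measurableSet_Iic
  have hslice (m : ℕ) :
      Prod.mk (m : ℝ) ⁻¹' ((fun p : ℝ × ℝ => p.1 + p.2) ⁻¹' Iic (n + a)) = Iic (n + a - m) := by
    ext b
    simp only [mem_preimage, mem_Iic]
    constructor <;> intro hb <;> linarith
  rw [Measure.map_apply (by fun_prop) measurableSet_Iic, Measure.prod_apply hmeas,
    lintegral_map (measurable_measure_prodMk_left hmeas) measurable_from_top]
  simp only [hslice, volume_Ioo_zero_one_Iic_natCast_add_sub ha₀ ha₁]
  rw [lintegral_add_left measurable_from_top, lintegral_indicator_const measurableSet_Iio,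
    lintegral_indicator_const (measurableSet_singleton n), one_mul]

lemma map_add_prod_volume_Ioo_zero_one_real_Iic (μ : Measure ℕ) [IsFiniteMeasure μ] (n : ℕ)
    {a : ℝ} (ha₀ : 0 ≤ a) (ha₁ : a < 1) :
    (Measure.map (fun p : ℝ × ℝ => p.1 + p.2)
        ((Measure.map (Nat.cast : ℕ → ℝ) μ).prod (volume.restrict (Ioo (0 : ℝ) 1)))).real
        (Iic (n + a))
      = μ.real (Iic n) + (a - 1) * μ.real {n} := by
  have hIic : μ.real (Iic n) = μ.real (Iio n) + μ.real {n} := by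
    rw [← Iio_insert, insert_eq, union_comm,
      measureReal_union (disjoint_singleton_right.2 self_notMem_Iio) (measurableSet_singleton n)]
  rw [measureReal_def, map_add_prod_volume_Ioo_zero_one_Iic μ n ha₀ ha₁,
    ENNReal.toReal_add (measure_ne_top μ _)
      (ENNReal.mul_ne_top ENNReal.ofReal_ne_top (measure_ne_top μ _)),
    ENNReal.toReal_mul, ENNReal.toReal_ofReal ha₀, hIic, ← measureReal_def, ← measureReal_def]
  ring

theorem lemma1_case_i_general (k x : ℝ) (n : ℕ)
    (h : x + r n x k ∈ Set.Ico (-(1 : ℝ) / 3) (2 / 3)) :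
    w n x k
      = (poissonMeasure ((n : ℝ) + x).toNNReal (Set.Iic n)).toReal
        + (x - 2 / 3 + k / (n + x))
          * (poissonMeasure ((n : ℝ) + x).toNNReal {n}).toReal := by
  set a := x + 1 / 3 + r n x k with ha
  have ha₀ : 0 ≤ a := by linarith [h.1]
  have ha₁ : a < 1 := by linarith [h.2]
  have hw : w n x k = (zMeasure (n + x)).real (Iic (n + a)) := by
    rw [w, measureReal_def, ha, r]
    congr 3
    ring
  rw [hw, zMeasure, map_add_prod_volume_Ioo_zero_one_real_Iic _ n ha₀ ha₁, ha, r,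
    measureReal_def, measureReal_def]
  ring

theorem lemma1_case_i (k x : ℝ) (hx : x ∈ Set.Ico (0 : ℝ) 1) (n : ℕ) (hn : 1 ≤ n)
    (h : x + r n x k ∈ Set.Ico (-(1 : ℝ) / 3) (2 / 3)) :
    w n x k
      = (poissonMeasure ((n : ℝ) + x).toNNReal (Set.Iic n)).toReal
        + (x - 2 / 3 + k / (n + x))
          * (poissonMeasure ((n : ℝ) + x).toNNReal {n}).toReal :=
  lemma1_case_i_general k x n h
end

section
/- (Lemma 4 (i)) For fixed v, x ∈ [0,1], as n → ∞, c_n(v,x) = 1 + (1/(n+1+x))·(x(1−v) − (1−v)²/2) + (1/(n+1+x)²)·(((1−v)²/2)(x²+x) − (1−v)³(x/2 + 1/3) + (1−v)⁴/8) + o(1/n²); i.e. n² times the difference of the two sides tends to 0. -/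
open MeasureTheory ProbabilityTheory Filter Real Set
open scoped ENNReal NNReal

private lemma aux_e2 (s x t e1 Y : ℝ) (hs0 : 0 ≤ s) (hs1 : s ≤ 1) (hx0 : 0 ≤ x) (hx1 : x ≤ 1)
    (ht0 : 0 < t) (ht : t ≤ 1/10) (he1 : |e1| ≤ 2*t^4)
    (hY : Y = (1 - x*t)*e1 + x*s^3*t^4/3) : |Y| ≤ 3*t^4 := by
  rw [abs_le] at he1 ⊢
  have hxt0 : 0 ≤ x*t := mul_nonneg hx0 ht0.le
  have hxt : x*t ≤ 1/10 := by nlinarith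
  have h1 : 0 ≤ x*s^3*t^4/3 := by positivity
  have h2 : x*s^3*t^4/3 ≤ t^4/3 := by
    have hs3 : s^3 ≤ 1 := pow_le_one₀ hs0 hs1
    have : x*s^3 ≤ 1 := by nlinarith [pow_nonneg hs0 3]
    nlinarith [pow_nonneg ht0.le 4]
  have h3 := mul_le_mul_of_nonneg_left he1.2 (show (0:ℝ) ≤ 1 - x*t by linarith)
  have h4 := mul_le_mul_of_nonneg_left he1.1 (show (0:ℝ) ≤ 1 - x*t by linarith)
  have ht4 : 0 ≤ t^4 := by positivity
  constructor <;> nlinarith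

private lemma aux_G (A B e2 t : ℝ) (hA : |A| ≤ 1) (hB : |B| ≤ 1/2) (he2 : |e2| ≤ 3*t^3)
    (ht0 : 0 < t) (ht : t ≤ 1/10) : |A*t + B*t^2 + e2| ≤ 2*t := by
  rw [abs_le] at hA hB he2 ⊢
  have ha1 := mul_le_mul_of_nonneg_right hA.1 ht0.le
  have ha2 := mul_le_mul_of_nonneg_right hA.2 ht0.le
  have hb1 := mul_le_mul_of_nonneg_right hB.1 (sq_nonneg t)
  have hb2 := mul_le_mul_of_nonneg_right hB.2 (sq_nonneg t)
  have hb3 := mul_le_mul_of_nonneg_right ht (sq_nonneg t)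
  constructor <;> nlinarith

private lemma aux_Bt (B e2 t : ℝ) (hB : |B| ≤ 1/2) (he2 : |e2| ≤ 3*t^3)
    (ht0 : 0 < t) (ht : t ≤ 1/10) : |B*t^2 + e2| ≤ t^2 := by
  rw [abs_le] at hB he2 ⊢
  have hb1 := mul_le_mul_of_nonneg_right hB.1 (sq_nonneg t)
  have hb2 := mul_le_mul_of_nonneg_right hB.2 (sq_nonneg t)
  have hb3 := mul_le_mul_of_nonneg_right ht (sq_nonneg t)
  constructor <;> nlinarith

private lemma aux_exp (G t : ℝ) (hG : |G| ≤ 2*t) (ht0 : 0 < t) (ht : t ≤ 1/10) :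
    |Real.exp G - (1 + G + G^2/2)| ≤ 8*t^3 := by
  have hG1 : |G| ≤ 1 := hG.trans (by linarith)
  have hexp := Real.exp_bound hG1 (n := 3) (by norm_num)
  have hsum3 : (∑ m ∈ Finset.range 3, G ^ m / m.factorial) = 1 + G + G^2/2 := by
    simp [Finset.sum_range_succ, Nat.factorial]
  rw [hsum3] at hexp
  refine hexp.trans ?_
  have hG3 : |G|^3 ≤ (2*t)^3 := pow_le_pow_left₀ (abs_nonneg G) hG 3
  have h3 : ((3:ℕ).succ / ((3:ℕ).factorial * 3) : ℝ) ≤ 1 := by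
    norm_num [Nat.factorial]
  nlinarith [pow_nonneg (abs_nonneg G) 3, pow_nonneg ht0.le 3]

set_option maxHeartbeats 2000000 in
private lemma key_est (s x t : ℝ) (hs0 : 0 ≤ s) (hs1 : s ≤ 1) (hx0 : 0 ≤ x) (hx1 : x ≤ 1)
    (ht0 : 0 < t) (ht : t ≤ 1/10) :
    |Real.exp ((1/t - x) * Real.log (1 - s*t) + s) -
      (1 + (x*s - s^2/2)*t + ((x*s - s^2/2)^2/2 + x*s^2/2 - s^3/3)*t^2)| ≤ 16*t^3 := by
  set u := s*t with hu
  have hAb : |x*s - s^2/2| ≤ 1 := by rw [abs_le]; constructor <;> nlinarith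
  have hBb : |x*s^2/2 - s^3/3| ≤ 1/2 := by rw [abs_le]; constructor <;> nlinarith
  have hu0 : 0 ≤ u := mul_nonneg hs0 ht0.le
  have hut : u ≤ t := by nlinarith
  have hu10 : u ≤ 1/10 := hut.trans ht
  have h1u : (9:ℝ)/10 ≤ 1 - u := by linarith
  have hlog := Real.abs_log_sub_add_sum_range_le (x := u)
    (by rw [abs_of_nonneg hu0]; linarith) 3
  have hsum : (∑ i ∈ Finset.range 3, u ^ (i + 1) / (i + 1)) = u + u^2/2 + u^3/3 := by
    simp [Finset.sum_range_succ]
    norm_num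
  rw [hsum, abs_of_nonneg hu0] at hlog
  norm_num at hlog
  set L := Real.log (1 - u) with hLdef
  set e1 := (u + u^2/2 + u^3/3) + L with he1def
  have he1 : |e1| ≤ 2*t^4 := by
    refine hlog.trans ?_
    rw [div_le_iff₀ (by linarith)]
    have h4 : u^4 ≤ t^4 := pow_le_pow_left₀ hu0 hut 4
    nlinarith [h4, mul_nonneg (pow_nonneg ht0.le 4) (show (0:ℝ) ≤ 1 - 2*u by linarith)]
  have hL : L = e1 - (u + u^2/2 + u^3/3) := by rw [he1def]; ring
  set A := x*s - s^2/2 with hA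
  set B := x*s^2/2 - s^3/3 with hB
  set G := (1/t - x)*L + s with hG
  set e2 := G - A*t - B*t^2 with he2def
  have hGe : t*e2 = (1 - x*t)*e1 + x*s^3*t^4/3 := by
    rw [he2def, hG, hL, hu, hA, hB]
    field_simp
    ring
  have hGeq : G = A*t + B*t^2 + e2 := by rw [he2def]; ring
  have hGsub : G - A*t = B*t^2 + e2 := by rw [he2def]; ring
  have hgoal : |Real.exp ((1/t - x) * Real.log (1 - s*t) + s) -
      (1 + (x*s - s^2/2)*t + ((x*s - s^2/2)^2/2 + x*s^2/2 - s^3/3)*t^2)|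
      = |Real.exp G - (1 + A*t + (A^2/2 + B)*t^2)| := by
    rw [hG, hLdef, hu, hA, hB]; ring_nf
  rw [hgoal]
  have hYb := aux_e2 s x t e1 (t*e2) hs0 hs1 hx0 hx1 ht0 ht he1 hGe
  clear_value L e1 A B G e2
  clear hL hLdef he1def hG he2def hu hlog hGe he1
  have he2 : |e2| ≤ 3*t^3 := by
    rw [abs_le] at hYb ⊢
    constructor
    · nlinarith [hYb.1]
    · nlinarith [hYb.2]
  have hGb : |G| ≤ 2*t := by rw [hGeq]; exact aux_G A B e2 t hAb hBb he2 ht0 ht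
  have he3 := aux_exp G t hGb ht0 ht
  have hprod : |(G - A*t)*(G + A*t)| ≤ 3*t^3 := by
    rw [abs_mul]
    have h1 : |G - A*t| ≤ t^2 := by rw [hGsub]; exact aux_Bt B e2 t hBb he2 ht0 ht
    have h2 : |G + A*t| ≤ 3*t := by
      have h3 : |A*t| ≤ t := by
        rw [abs_mul, abs_of_pos ht0]
        exact mul_le_of_le_one_left ht0.le hAb
      calc |G + A*t| ≤ |G| + |A*t| := abs_add_le _ _
        _ ≤ 2*t + t := add_le_add hGb h3
        _ = 3*t := by ring
    calc |G - A*t| * |G + A*t| ≤ t^2 * (3*t) :=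
        mul_le_mul h1 h2 (abs_nonneg _) (by positivity)
      _ = 3*t^3 := by ring
  have hdecomp : Real.exp G - (1 + A*t + (A^2/2 + B)*t^2)
      = (Real.exp G - (1 + G + G^2/2)) + e2 + (G - A*t)*(G + A*t)/2 := by
    rw [hGeq]; ring
  calc |Real.exp G - (1 + A*t + (A^2/2 + B)*t^2)|
      = |(Real.exp G - (1 + G + G^2/2)) + e2 + (G - A*t)*(G + A*t)/2| := by rw [hdecomp]
    _ ≤ |(Real.exp G - (1 + G + G^2/2)) + e2| + |(G - A*t)*(G + A*t)/2| := abs_add_le _ _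
    _ ≤ (|Real.exp G - (1 + G + G^2/2)| + |e2|) + |(G - A*t)*(G + A*t)|/2 := by
        rw [abs_div]
        gcongr
        · exact abs_add_le _ _
        · simp
    _ ≤ (8*t^3 + 3*t^3) + (3*t^3)/2 := by
        gcongr
    _ ≤ 16*t^3 := by nlinarith [pow_pos ht0 3]

set_option maxHeartbeats 1000000 in
theorem lemma4_i (v x : ℝ) (hv : v ∈ Set.Icc (0 : ℝ) 1) (hx : x ∈ Set.Icc (0 : ℝ) 1) :
    Tendsto (fun n : ℕ => (n : ℝ) ^ 2 *
      (c n v x -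
        (1 + 1 / ((n : ℝ) + 1 + x) * (x * (1 - v) - (1 - v) ^ 2 / 2)
          + 1 / ((n : ℝ) + 1 + x) ^ 2 *
            ((1 - v) ^ 2 / 2 * (x ^ 2 + x) - (1 - v) ^ 3 * (x / 2 + 1 / 3)
              + (1 - v) ^ 4 / 8))))
      atTop (nhds 0) := by
  obtain ⟨hv0, hv1⟩ := hv
  obtain ⟨hx0, hx1⟩ := hx
  have hs0 : (0:ℝ) ≤ 1 - v := by linarith
  have hs1 : (1:ℝ) - v ≤ 1 := by linarith
  apply squeeze_zero_norm' (a := fun n : ℕ => 16 / (n:ℝ))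
  · filter_upwards [eventually_ge_atTop 10] with n hn
    have hn10 : (10:ℝ) ≤ (n:ℝ) := by exact_mod_cast hn
    set m : ℝ := (n:ℝ) + 1 + x with hm
    have hm0 : (0:ℝ) < m := by rw [hm]; linarith
    have ht0 : 0 < 1/m := by positivity
    have ht : 1/m ≤ 1/10 := by
      rw [div_le_div_iff₀ hm0 (by norm_num)]
      rw [hm]; linarith
    have hkey := key_est (1-v) x (1/m) hs0 hs1 hx0 hx1 ht0 ht
    have hinv : 1/(1/m) = m := one_div_one_div m
    have harg : (1/(1/m) - x) = (n:ℝ) + 1 := by rw [hinv, hm]; ring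
    have hbase : 1 - (1-v)*(1/m) = ((n:ℝ)+v+x)/m := by
      field_simp
      rw [hm]; ring
    have hnvx : (0:ℝ) < (n:ℝ)+v+x := by linarith
    have hcpos : (0:ℝ) < ((n:ℝ)+v+x)/m := div_pos hnvx hm0
    have hpow : (((n:ℝ)+v+x)/m)^(n+1)
        = Real.exp ((((n:ℕ)+1 : ℕ):ℝ) * Real.log (((n:ℝ)+v+x)/m)) := by
      conv_lhs => rw [← Real.exp_log hcpos]
      rw [← Real.exp_nat_mul]
    have hc : c n v x = Real.exp ((1/(1/m) - x) * Real.log (1 - (1-v)*(1/m)) + (1-v)) := by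
      rw [harg, hbase, c, ← hm, hpow, ← Real.exp_add]
      push_cast
      ring_nf
    rw [hc]
    have hP : (1 + 1 / ((n : ℝ) + 1 + x) * (x * (1 - v) - (1 - v) ^ 2 / 2)
          + 1 / ((n : ℝ) + 1 + x) ^ 2 *
            ((1 - v) ^ 2 / 2 * (x ^ 2 + x) - (1 - v) ^ 3 * (x / 2 + 1 / 3)
              + (1 - v) ^ 4 / 8))
        = (1 + (x*(1-v) - (1-v)^2/2)*(1/m)
            + ((x*(1-v) - (1-v)^2/2)^2/2 + x*(1-v)^2/2 - (1-v)^3/3)*(1/m)^2) := by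
      have hne : ((n:ℝ) + 1 + x) ≠ 0 := ne_of_gt (by linarith)
      rw [hm]; field_simp; ring
    rw [Real.norm_eq_abs, abs_mul, abs_of_nonneg (sq_nonneg ((n:ℝ))), hP]
    have hn0 : (0:ℝ) < (n:ℝ) := by linarith
    calc (n:ℝ)^2 * |Real.exp ((1/(1/m) - x) * Real.log (1 - (1-v)*(1/m)) + (1-v)) -
          (1 + (x*(1-v) - (1-v)^2/2)*(1/m)
            + ((x*(1-v) - (1-v)^2/2)^2/2 + x*(1-v)^2/2 - (1-v)^3/3)*(1/m)^2)|
        ≤ (n:ℝ)^2 * (16*(1/m)^3) := by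
          apply mul_le_mul_of_nonneg_left hkey (sq_nonneg _)
      _ ≤ (n:ℝ)^2 * (16*(1/(n:ℝ))^3) := by
          have h1m : 1/m ≤ 1/(n:ℝ) := by
            apply one_div_le_one_div_of_le hn0
            rw [hm]; linarith
          gcongr
      _ = 16/(n:ℝ) := by
          field_simp
  · exact tendsto_const_div_atTop_nhds_zero_nat 16
end

section
/- (Lemma 4 (iii)) For fixed x ∈ [0,1], as n → ∞, ∫₀¹ c_n(v,x) dv = 1 + (1/(n+1+x))·(x/2 − 1/6) + (1/(n+1+x)²)·(x²/6 + x/24 − 7/120) + o(1/n²); i.e. n² times the difference of the two sides tends to 0. -/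
open MeasureTheory ProbabilityTheory Filter Real Set
open scoped ENNReal NNReal

/-! Put `s = 1 / (n + 1 + x)` and `t = v - 1 ∈ [-1, 0]`. Then `c_n(v, x) = exp ψ` with
`ψ = (1 / s - x) * log (1 + t * s) - t`. The cubic Taylor polynomial of `log (1 + u)` gives
`ψ = s * A + s ^ 2 * B + O(s ^ 3)` with `A = logCoeff₁ x t`, `B = logCoeff₂ x t`, and the
quadratic one of `exp` then gives `c_n(v, x) = 1 + s * A + s ^ 2 * (B + A ^ 2 / 2) + O(s ^ 3)`,
uniformly in `v ∈ [0, 1]`. Integrating this polynomial in `v` yields the stated coefficients,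
and `O(s ^ 3)` is `o(1 / n ^ 2)`. -/

lemma abs_exp_sub_quadratic_le {y : ℝ} (hy : |y| ≤ 1) :
    |exp y - (1 + y + y ^ 2 / 2)| ≤ |y| ^ 3 := by
  have h := Real.exp_bound hy (n := 3) (by norm_num)
  norm_num [Finset.sum_range_succ, Nat.factorial] at h
  nlinarith [pow_nonneg (abs_nonneg y) 3]

lemma abs_log_one_add_sub_cubic_le {u : ℝ} (hu : |u| ≤ 1 / 3) :
    |log (1 + u) - (u - u ^ 2 / 2 + u ^ 3 / 3)| ≤ 3 / 2 * u ^ 4 := by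
  have h := abs_log_sub_add_sum_range_le (x := -u) (by rw [abs_neg]; linarith) 3
  norm_num [Finset.sum_range_succ, abs_neg] at h
  calc |log (1 + u) - (u - u ^ 2 / 2 + u ^ 3 / 3)|
      = |-u + u ^ 2 / 2 + (-u) ^ 3 / 3 + log (1 + u)| := by ring_nf
    _ ≤ |u| ^ 4 / (1 - |u|) := h
    _ ≤ |u| ^ 4 / (2 / 3) := by gcongr; linarith
    _ = 3 / 2 * u ^ 4 := by rw [pow_abs, abs_of_nonneg (by positivity)]; ring

noncomputable def logCoeff₁ (x t : ℝ) : ℝ := -(t ^ 2 / 2 + x * t)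

noncomputable def logCoeff₂ (x t : ℝ) : ℝ := t ^ 3 / 3 + x * t ^ 2 / 2

lemma abs_logCoeff₁_le {x t : ℝ} (hx₀ : 0 ≤ x) (hx₁ : x ≤ 1) (ht₀ : -1 ≤ t)
    (ht₁ : t ≤ 0) : |logCoeff₁ x t| ≤ 1 := by
  rw [logCoeff₁, abs_le]; constructor <;> nlinarith

lemma abs_logCoeff₂_le {x t : ℝ} (hx₀ : 0 ≤ x) (hx₁ : x ≤ 1) (ht₀ : -1 ≤ t)
    (ht₁ : t ≤ 0) : |logCoeff₂ x t| ≤ 1 := by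
  rw [logCoeff₂, abs_le]
  constructor <;> nlinarith [sq_nonneg t, mul_nonneg hx₀ (sq_nonneg t)]

lemma abs_exponent_sub_second_order_le {x t s : ℝ} (hx₀ : 0 ≤ x) (hx₁ : x ≤ 1)
    (ht₀ : -1 ≤ t) (ht₁ : t ≤ 0) (hs₀ : 0 < s) (hs : s ≤ 1 / 3) :
    |(1 / s - x) * log (1 + t * s) - t - (s * logCoeff₁ x t + s ^ 2 * logCoeff₂ x t)|
      ≤ 2 * s ^ 3 := by
  set R := log (1 + t * s) - (t * s - (t * s) ^ 2 / 2 + (t * s) ^ 3 / 3)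
  have hts : |t * s| ≤ 1 / 3 := by
    rw [abs_mul, abs_of_pos hs₀]
    nlinarith [abs_le.mpr ⟨ht₀, ht₁.trans zero_le_one⟩, abs_nonneg t]
  have hR : |R| ≤ 3 / 2 * (t * s) ^ 4 := abs_log_one_add_sub_cubic_le hts
  have ht4 : t ^ 4 ≤ 1 := by
    have : t ^ 2 ≤ 1 := by nlinarith
    nlinarith [sq_nonneg t]
  have hxR : |(1 / s - x) * R| ≤ 3 / 2 * s ^ 3 := by
    have hsx : 0 ≤ 1 / s - x := by
      have : 3 ≤ 1 / s := by rw [le_div_iff₀ hs₀]; linarith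
      linarith
    calc |(1 / s - x) * R| = (1 / s - x) * |R| := by rw [abs_mul, abs_of_nonneg hsx]
      _ ≤ (1 / s) * (3 / 2 * (t * s) ^ 4) := by gcongr; linarith
      _ = 3 / 2 * t ^ 4 * s ^ 3 := by field_simp
      _ ≤ 3 / 2 * s ^ 3 := by nlinarith [pow_pos hs₀ 3]
  have hxt : |x * t ^ 3 * s ^ 3 / 3| ≤ 1 / 3 * s ^ 3 := by
    have : |x * t ^ 3| ≤ 1 := by
      rw [abs_mul, abs_pow]
      exact mul_le_one₀ (abs_le.mpr ⟨by linarith, hx₁⟩) (by positivity)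
        (pow_le_one₀ (abs_nonneg _) (abs_le.mpr ⟨ht₀, by linarith⟩))
    rw [abs_div, abs_mul (x * t ^ 3), abs_of_pos (pow_pos hs₀ 3),
      abs_of_pos (three_pos : (0 : ℝ) < 3)]
    nlinarith [pow_pos hs₀ 3]
  -- since `(1 / s) * s = 1`, all terms of order at most `s ^ 2` cancel
  calc _ = |(1 / s - x) * R - x * t ^ 3 * s ^ 3 / 3| := by
        congr 1; simp only [R, logCoeff₁, logCoeff₂]; field_simp; ring
    _ ≤ |(1 / s - x) * R| + |x * t ^ 3 * s ^ 3 / 3| := abs_sub _ _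
    _ ≤ 2 * s ^ 3 := by linarith [pow_pos hs₀ 3]

lemma abs_exp_sub_second_order_le {ψ A B s : ℝ} (hA : |A| ≤ 1) (hB : |B| ≤ 1)
    (hs₀ : 0 ≤ s) (hs : s ≤ 1 / 3) (hψ : |ψ - (s * A + s ^ 2 * B)| ≤ 2 * s ^ 3) :
    |exp ψ - (1 + s * A + s ^ 2 * (B + A ^ 2 / 2))| ≤ 13 * s ^ 3 := by
  set D := ψ - (s * A + s ^ 2 * B)
  have hsA : |s * A| ≤ s := by
    rw [abs_mul, abs_of_nonneg hs₀]; exact mul_le_of_le_one_right hs₀ hA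
  have hsB : |s ^ 2 * B| ≤ s ^ 2 := by
    rw [abs_mul, abs_of_nonneg (by positivity)]; exact mul_le_of_le_one_right (by positivity) hB
  have hs3 : s ^ 3 ≤ s ^ 2 / 3 := by nlinarith [sq_nonneg s]
  have hs2 : s ^ 2 ≤ s / 3 := by nlinarith
  have hψ_eq : ψ = s * A + s ^ 2 * B + D := by ring
  have hψ_le : |ψ| ≤ 2 * s := by
    rw [hψ_eq]
    calc |s * A + s ^ 2 * B + D| ≤ |s * A| + |s ^ 2 * B| + |D| := abs_add_three _ _ _
      _ ≤ 2 * s := by linarith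
  have hE : |exp ψ - (1 + ψ + ψ ^ 2 / 2)| ≤ 8 * s ^ 3 :=
    calc _ ≤ |ψ| ^ 3 := abs_exp_sub_quadratic_le (by linarith)
      _ ≤ (2 * s) ^ 3 := by gcongr
      _ = 8 * s ^ 3 := by ring
  -- `ψ ^ 2 - (s * A) ^ 2 = (s ^ 2 * B + D) * (ψ + s * A)` is of order `s ^ 2 * s`
  have hprod : |(s ^ 2 * B + D) * (ψ + s * A)| ≤ 6 * s ^ 3 :=
    calc _ = |s ^ 2 * B + D| * |ψ + s * A| := abs_mul _ _
      _ ≤ (2 * s ^ 2) * (3 * s) := by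
        gcongr
        · linarith [abs_add_le (s ^ 2 * B) D, sq_nonneg s]
        · linarith [abs_add_le ψ (s * A)]
      _ = 6 * s ^ 3 := by ring
  calc |exp ψ - (1 + s * A + s ^ 2 * (B + A ^ 2 / 2))|
      = |(exp ψ - (1 + ψ + ψ ^ 2 / 2)) + D + (s ^ 2 * B + D) * (ψ + s * A) / 2| := by
        congr 1; simp only [D]; ring
    _ ≤ |exp ψ - (1 + ψ + ψ ^ 2 / 2)| + |D| + |(s ^ 2 * B + D) * (ψ + s * A)| / 2 := by
      rw [← abs_two, ← abs_div, abs_two]; exact abs_add_three _ _ _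
    _ ≤ 13 * s ^ 3 := by linarith

noncomputable def cApprox (x s v : ℝ) : ℝ :=
  1 + s * logCoeff₁ x (v - 1) + s ^ 2 * (logCoeff₂ x (v - 1) + logCoeff₁ x (v - 1) ^ 2 / 2)

lemma integral_cApprox (x s : ℝ) :
    ∫ v in (0 : ℝ)..1, cApprox x s v
      = 1 + s * (x / 2 - 1 / 6) + s ^ 2 * (x ^ 2 / 6 + x / 24 - 7 / 120) := by
  have h := intervalIntegral.integral_comp_sub_right (a := 0) (b := 1)
    (fun t => 1 + s * logCoeff₁ x t + s ^ 2 * (logCoeff₂ x t + logCoeff₁ x t ^ 2 / 2)) 1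
  -- the linear term is written as `t ^ 1` so that `integral_pow` evaluates it
  have hpoly :
      (fun t => 1 + s * logCoeff₁ x t + s ^ 2 * (logCoeff₂ x t + logCoeff₁ x t ^ 2 / 2))
      = fun t => 1 + -(s * x) * t ^ 1 + (s ^ 2 * x ^ 2 / 2 + s ^ 2 * x / 2 - s / 2) * t ^ 2
        + (s ^ 2 / 3 + s ^ 2 * x / 2) * t ^ 3 + s ^ 2 / 8 * t ^ 4 := by
    funext t; simp only [logCoeff₁, logCoeff₂]; ring
  simp only [cApprox, h, hpoly]
  simp (disch := apply Continuous.intervalIntegrable; fun_prop) only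
    [intervalIntegral.integral_add, intervalIntegral.integral_const_mul, integral_pow,
      intervalIntegral.integral_const]
  norm_num; ring

lemma c_eq_exp {n : ℕ} {v x : ℝ} (hv : 0 < (n : ℝ) + v + x) (hm : 0 < (n : ℝ) + 1 + x) :
    c n v x = exp ((n + 1) * log (1 + (v - 1) / (n + 1 + x)) - (v - 1)) := by
  have hbase : ((n : ℝ) + v + x) / (n + 1 + x) = 1 + (v - 1) / (n + 1 + x) := by
    field_simp; ring
  rw [c, ← exp_log (div_pos hv hm), ← exp_nat_mul, ← exp_add, hbase]
  congr 1; push_cast; ring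

lemma abs_c_sub_cApprox_le {n : ℕ} {v x : ℝ} (hx₀ : 0 ≤ x) (hx₁ : x ≤ 1)
    (hv₀ : 0 ≤ v) (hv₁ : v ≤ 1) (hn : 3 ≤ (n : ℝ) + 1 + x) :
    |c n v x - cApprox x (1 / ((n : ℝ) + 1 + x)) v| ≤ 13 / ((n : ℝ) + 1 + x) ^ 3 := by
  set s := 1 / ((n : ℝ) + 1 + x) with hs_def
  have hs₀ : 0 < s := by positivity
  have hs : s ≤ 1 / 3 := one_div_le_one_div_of_le (by norm_num) hn
  have hc : c n v x = exp ((1 / s - x) * log (1 + (v - 1) * s) - (v - 1)) := by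
    rw [c_eq_exp (by linarith) (by linarith), hs_def, one_div_one_div, ← div_eq_mul_one_div]
    ring_nf
  rw [hc, div_eq_mul_one_div 13, ← one_div_pow]
  exact abs_exp_sub_second_order_le (abs_logCoeff₁_le hx₀ hx₁ (by linarith) (by linarith))
    (abs_logCoeff₂_le hx₀ hx₁ (by linarith) (by linarith)) hs₀.le hs
    (abs_exponent_sub_second_order_le hx₀ hx₁ (by linarith) (by linarith) hs₀ hs)

lemma tendsto_nat_sq_mul_of_abs_le {a : ℕ → ℝ} {C : ℝ}
    (h : ∀ᶠ n in atTop, |a n| ≤ C / (n : ℝ) ^ 3) :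
    Tendsto (fun n : ℕ => (n : ℝ) ^ 2 * a n) atTop (nhds 0) := by
  refine squeeze_zero_norm' ?_ (tendsto_const_div_atTop_nhds_zero_nat C)
  filter_upwards [h, eventually_gt_atTop 0] with n hn hn₀
  have hn₀' : (0 : ℝ) < n := by exact_mod_cast hn₀
  calc ‖(n : ℝ) ^ 2 * a n‖ = (n : ℝ) ^ 2 * |a n| := by
        rw [norm_mul, norm_pow, Real.norm_natCast, Real.norm_eq_abs]
    _ ≤ (n : ℝ) ^ 2 * (C / (n : ℝ) ^ 3) := by gcongr
    _ = C / n := by field_simp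

lemma abs_integral_c_sub_le {n : ℕ} {x : ℝ} (hx₀ : 0 ≤ x) (hx₁ : x ≤ 1)
    (hn : 3 ≤ (n : ℝ) + 1 + x) :
    |(∫ v in (0 : ℝ)..1, c n v x) - (1 + 1 / ((n : ℝ) + 1 + x) * (x / 2 - 1 / 6)
      + (1 / ((n : ℝ) + 1 + x)) ^ 2 * (x ^ 2 / 6 + x / 24 - 7 / 120))|
      ≤ 13 / ((n : ℝ) + 1 + x) ^ 3 := by
  have hc : Continuous fun v => c n v x := by unfold c; fun_prop
  have hq : Continuous fun v => cApprox x (1 / ((n : ℝ) + 1 + x)) v := by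
    unfold cApprox logCoeff₁ logCoeff₂; fun_prop
  rw [← integral_cApprox,
    ← intervalIntegral.integral_sub (hc.intervalIntegrable 0 1) (hq.intervalIntegrable 0 1)]
  have hbound : ∀ v ∈ uIoc (0 : ℝ) 1,
      ‖c n v x - cApprox x (1 / ((n : ℝ) + 1 + x)) v‖ ≤ 13 / ((n : ℝ) + 1 + x) ^ 3 := by
    intro v hv
    rw [uIoc_of_le zero_le_one] at hv
    exact abs_c_sub_cApprox_le hx₀ hx₁ hv.1.le hv.2 hn
  simpa using intervalIntegral.norm_integral_le_of_norm_le_const hbound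

theorem lemma4_iii (x : ℝ) (hx : x ∈ Set.Icc (0 : ℝ) 1) :
    Tendsto (fun n : ℕ => (n : ℝ) ^ 2 *
      ((∫ v in (0 : ℝ)..1, c n v x) -
        (1 + 1 / ((n : ℝ) + 1 + x) * (x / 2 - 1 / 6)
          + 1 / ((n : ℝ) + 1 + x) ^ 2 * (x ^ 2 / 6 + x / 24 - 7 / 120))))
      atTop (nhds 0) := by
  obtain ⟨hx₀, hx₁⟩ := hx
  refine tendsto_nat_sq_mul_of_abs_le (C := 13) ?_
  filter_upwards [eventually_ge_atTop 2] with n hn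
  have hn' : (2 : ℝ) ≤ n := by exact_mod_cast hn
  rw [← one_div_pow]
  calc _ ≤ 13 / ((n : ℝ) + 1 + x) ^ 3 := abs_integral_c_sub_le hx₀ hx₁ (by linarith)
    _ ≤ 13 / (n : ℝ) ^ 3 := by gcongr; linarith
end

section
/- (Lemma 4 (v)) For fixed x ∈ [0,1) and k ∈ ℝ, as n → ∞, r_{n+1}(x,k) − ((n+1)/(n+x))·c_n(0,x)·r_n(x,k) = (−3k/2)·(1/(n+1+x)²) + o(1/n²); i.e. n² times the difference of the two sides tends to 0. -/
open MeasureTheory ProbabilityTheory Filter Real Set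
open scoped ENNReal NNReal

/-!
With `m = n + 1 + x` one has `r_{n+1} = k / m`, `r_n = k / (m - 1)`, `(n + 1) / (n + x) =
(m - x) / (m - 1)` and `c_n(0, x) = exp h` with `h = 1 + (m - x) log (1 - 1/m)`, so everything
reduces to the one-variable limit `m² (1/m - (m - x)/(m - 1)² · exp h) → -3/2` as `m → ∞`.
The second-order expansion `log (1 - 1/m) = -1/m - 1/(2m²) + O(1/m³)` gives `m h → x - 1/2`,
hence `m (exp h - 1) → x - 1/2`, while the rational factor contributes `x - 2`.
-/

open Topology

lemma tendsto_zero_of_tendsto_mul_of_tendsto_atTop {α : Type*} {l : Filter α} {a f : α → ℝ}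
    {L : ℝ} (ha : Tendsto a l atTop) (hf : Tendsto (fun t => a t * f t) l (𝓝 L)) :
    Tendsto f l (𝓝 0) := by
  refine (hf.div_atTop ha).congr' ?_
  filter_upwards [ha.eventually_gt_atTop 0] with t ht
  field_simp

lemma tendsto_mul_exp_sub_one_of_tendsto_mul {α : Type*} {l : Filter α} {a f : α → ℝ} {L : ℝ}
    (ha : Tendsto a l atTop) (hf : Tendsto (fun t => a t * f t) l (𝓝 L)) :
    Tendsto (fun t => a t * (exp (f t) - 1)) l (𝓝 L) := by
  have hf0 := tendsto_zero_of_tendsto_mul_of_tendsto_atTop ha hf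
  have hrem : Tendsto (fun t => a t * (exp (f t) - 1 - f t)) l (𝓝 0) := by
    have hbound : Tendsto (fun t => |a t * f t * f t|) l (𝓝 0) := by
      simpa using (hf.mul hf0).abs
    refine squeeze_zero_norm' ?_ hbound
    filter_upwards [ha.eventually_ge_atTop 0,
      hf0.abs.eventually_le_const (by norm_num : |(0 : ℝ)| < 1)] with t hat hft
    calc ‖a t * (exp (f t) - 1 - f t)‖ = a t * |exp (f t) - 1 - f t| := by
          rw [norm_eq_abs, abs_mul, abs_of_nonneg hat]
      _ ≤ a t * f t ^ 2 := by gcongr; exact abs_exp_sub_one_sub_id_le hft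
      _ ≤ |a t * f t * f t| := by rw [mul_assoc, ← sq]; exact le_abs_self _
  simpa using (hrem.add hf).congr fun t => by ring

lemma tendsto_sq_mul_log_one_sub_inv_add_inv :
    Tendsto (fun m : ℝ => m ^ 2 * (log (1 - m⁻¹) + m⁻¹)) atTop (𝓝 (-1 / 2)) := by
  suffices h :
      Tendsto (fun m : ℝ => m ^ 2 * (log (1 - m⁻¹) + m⁻¹ + m⁻¹ ^ 2 / 2)) atTop (𝓝 0) by
    refine (h.sub_const (1 / 2)).congr' ?_ |>.trans (by norm_num)
    filter_upwards [eventually_ne_atTop 0] with m hm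
    field_simp; ring
  refine squeeze_zero_norm' (a := fun m : ℝ => (m - 1)⁻¹) ?_
    (tendsto_inv_atTop_zero.comp (tendsto_atTop_add_const_right _ (-1) tendsto_id))
  filter_upwards [eventually_ge_atTop (2 : ℝ)] with m hm
  have hu : |m⁻¹| = m⁻¹ := abs_of_pos (by positivity)
  have htaylor : |log (1 - m⁻¹) + m⁻¹ + m⁻¹ ^ 2 / 2| ≤ m⁻¹ ^ 3 / (1 - m⁻¹) := by
    have := abs_log_sub_add_sum_range_le (x := m⁻¹)
      (by rw [hu]; exact inv_lt_one_of_one_lt₀ (by linarith)) 2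
    norm_num [Finset.sum_range_succ, hu] at this
    convert this using 2 <;> ring
  have hm1 : m - 1 ≠ 0 := by linarith
  calc ‖m ^ 2 * (log (1 - m⁻¹) + m⁻¹ + m⁻¹ ^ 2 / 2)‖
      = m ^ 2 * |log (1 - m⁻¹) + m⁻¹ + m⁻¹ ^ 2 / 2| := by
        rw [norm_eq_abs, abs_mul, abs_of_nonneg (sq_nonneg m)]
    _ ≤ m ^ 2 * (m⁻¹ ^ 3 / (1 - m⁻¹)) := by gcongr
    _ = (m - 1)⁻¹ := by field_simp

lemma tendsto_mul_one_add_sub_mul_log_one_sub_inv (x : ℝ) :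
    Tendsto (fun m : ℝ => m * (1 + (m - x) * log (1 - m⁻¹))) atTop (𝓝 (x - 1 / 2)) := by
  have hlog : Tendsto (fun m : ℝ => m * log (1 - m⁻¹)) atTop (𝓝 (-1)) :=
    (tendsto_mul_log_one_add_div_atTop (-1)).congr fun m => by ring_nf
  refine (tendsto_sq_mul_log_one_sub_inv_add_inv.sub (hlog.const_mul x)).congr' ?_
    |>.trans (le_of_eq (by congr 1; ring))
  filter_upwards [eventually_ne_atTop 0] with m hm
  field_simp; ring

lemma tendsto_mul_one_sub_mul_sub_div_sub_one_sq (x : ℝ) :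
    Tendsto (fun m : ℝ => m * (1 - m * (m - x) / (m - 1) ^ 2)) atTop (𝓝 (x - 2)) := by
  have hinv : Tendsto (fun m : ℝ => m⁻¹) atTop (𝓝 0) := tendsto_inv_atTop_zero
  have hlim : Tendsto (fun m : ℝ => (x - 2 + m⁻¹) / (1 - m⁻¹) ^ 2) atTop (𝓝 (x - 2)) := by
    convert ((tendsto_const_nhds (x := x - 2)).add hinv).div
      ((tendsto_const_nhds.sub hinv).pow 2) (by norm_num : (1 - 0 : ℝ) ^ 2 ≠ 0) using 2 <;> simp
  refine hlim.congr' ?_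
  filter_upwards [eventually_gt_atTop 1] with m hm
  have hm0 : m ≠ 0 := by positivity
  have hm1 : m - 1 ≠ 0 := by linarith
  field_simp; ring

lemma tendsto_sq_mul_inv_sub_exp (x : ℝ) :
    Tendsto (fun m : ℝ => m ^ 2 *
      (m⁻¹ - (m - x) / (m - 1) ^ 2 * exp (1 + (m - x) * log (1 - m⁻¹))))
      atTop (𝓝 (-3 / 2)) := by
  -- with `A = m (m - x) / (m - 1) ^ 2` and `h` the exponent, the expression is
  -- `m (1 - A) - A · m (exp h - 1)`, where `m (1 - A) → x - 2`, `A → 1`, `m (exp h - 1) → x - 1/2`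
  have hA := tendsto_mul_one_sub_mul_sub_div_sub_one_sq x
  have hA1 : Tendsto (fun m : ℝ => m * (m - x) / (m - 1) ^ 2) atTop (𝓝 1) := by
    simpa using (tendsto_zero_of_tendsto_mul_of_tendsto_atTop tendsto_id hA).const_sub 1
  have hexp := tendsto_mul_exp_sub_one_of_tendsto_mul tendsto_id
    (tendsto_mul_one_add_sub_mul_log_one_sub_inv x)
  refine (hA.sub (hA1.mul hexp)).congr' ?_ |>.trans (le_of_eq (by congr 1; ring))
  filter_upwards [eventually_gt_atTop 1] with m hm
  have hm0 : m ≠ 0 := by positivity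
  have hm1 : m - 1 ≠ 0 := by linarith
  simp only [id]
  field_simp; ring

lemma c_zero_eq_exp {n : ℕ} {x : ℝ} (hnx : 0 < n + x) :
    c n 0 x = exp (1 + (n + 1) * log (1 - ((n : ℝ) + 1 + x)⁻¹)) := by
  have hm : (0 : ℝ) < n + 1 + x := by linarith
  have hbase : ((n : ℝ) + 0 + x) / (n + 1 + x) = 1 - ((n : ℝ) + 1 + x)⁻¹ := by
    field_simp; ring
  have hpos : 0 < 1 - ((n : ℝ) + 1 + x)⁻¹ := by rw [← hbase, add_zero]; exact div_pos hnx hm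
  rw [c, hbase, ← rpow_natCast, rpow_def_of_pos hpos, sub_zero, ← exp_add]
  push_cast; ring_nf

theorem lemma4_v_general (x k : ℝ) :
    Tendsto (fun n : ℕ => (n : ℝ) ^ 2 *
      ((r (n + 1) x k - ((n : ℝ) + 1) / ((n : ℝ) + x) * c n 0 x * r n x k) -
        (-(3 * k) / 2 * (1 / ((n : ℝ) + 1 + x) ^ 2))))
      atTop (nhds 0) := by
  have hm : Tendsto (fun n : ℕ => (n : ℝ) + 1 + x) atTop atTop :=
    tendsto_atTop_add_const_right _ _
      (tendsto_atTop_add_const_right _ _ tendsto_natCast_atTop_atTop)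
  have hratio : Tendsto (fun n : ℕ => (n : ℝ) / (n + 1 + x)) atTop (𝓝 1) := by
    simpa only [add_assoc] using tendsto_natCast_div_add_atTop (1 + x)
  have hlim := ((hratio.pow 2).const_mul k).mul
    (((tendsto_sq_mul_inv_sub_exp x).add_const (3 / 2)).comp hm)
  refine (hlim.congr' ?_).trans (by norm_num)
  filter_upwards
    [(tendsto_atTop_add_const_right _ x tendsto_natCast_atTop_atTop).eventually_gt_atTop 0]
    with n hnx
  have hm1 : (n : ℝ) + 1 + x ≠ 0 := by linarith
  simp only [Function.comp, r, c_zero_eq_exp hnx]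
  push_cast
  rw [show (n : ℝ) + 1 + x - 1 = n + x by ring, show (n : ℝ) + 1 + x - x = n + 1 by ring]
  field_simp; ring

theorem lemma4_v (x k : ℝ) (hx : x ∈ Set.Ico (0 : ℝ) 1) :
    Tendsto (fun n : ℕ => (n : ℝ) ^ 2 *
      ((r (n + 1) x k - ((n : ℝ) + 1) / ((n : ℝ) + x) * c n 0 x * r n x k) -
        (-(3 * k) / 2 * (1 / ((n : ℝ) + 1 + x) ^ 2))))
      atTop (nhds 0) :=
  lemma4_v_general x k
end

section
/- (Lemma 4 (vii)) For fixed x ∈ [0,1) and k ∈ ℝ, as n → ∞, ((n+1+x)/(n+2))·r_{n+1}(x,k) − c_n(0,x)·r_n(x,k) = (−3k/2)·(1/(n+1+x)²) + o(1/n²); i.e. n² times the difference of the two sides tends to 0. -/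
open MeasureTheory ProbabilityTheory Filter Real Set
open scoped ENNReal NNReal

/-!
Put `u = 1/n`. Writing `log (1 + t) = t · L t` with `L` continued by `L 0 = 1`, the factor
`c_n(0,x)` becomes `C(u) = exp (1 + (1 + u) (x L(xu) - (1 + x) L((1 + x)u)))`, which is
differentiable at `u = 0` because `L' 0 = -1/2`. After cancelling `n + 1 + x`, `n²` times the
difference is `k (A(u) - A(0))/u` with `A(u) = 1/(1 + 2u) - C(u)/(1 + xu)`, which tends to
`k A'(0) = -3k/2`, while `n² · 3k/(2 (n + 1 + x)²)` tends to `3k/2`.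
-/

open scoped Topology

noncomputable def logOneAddDiv (t : ℝ) : ℝ := if t = 0 then 1 else Real.log (1 + t) / t

lemma mul_logOneAddDiv_mul (a : ℝ) {u : ℝ} (hu : u ≠ 0) :
    a * logOneAddDiv (a * u) = Real.log (1 + a * u) / u := by
  by_cases ha : a = 0
  · simp [ha]
  · rw [logOneAddDiv, if_neg (mul_ne_zero ha hu)]
    field_simp

lemma hasDerivAt_logOneAddDiv_zero : HasDerivAt logOneAddDiv (-(1 / 2)) 0 := by
  rw [hasDerivAt_iff_tendsto_slope, ← tendsto_sub_nhds_zero_iff]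
  have hbound : Tendsto (fun t : ℝ => |t| / (1 - |t|)) (𝓝[≠] 0) (𝓝 0) := by
    have h :
        Tendsto (fun t : ℝ => |t| / (1 - |t|)) (𝓝 0) (𝓝 (|(0 : ℝ)| / (1 - |(0 : ℝ)|))) :=
      (continuous_abs.tendsto 0).div ((continuous_const.sub continuous_abs).tendsto 0)
        (by norm_num)
    simpa using h.mono_left nhdsWithin_le_nhds
  refine squeeze_zero_norm' ?_ hbound
  filter_upwards [self_mem_nhdsWithin, eventually_nhdsWithin_of_eventually_nhds
    (eventually_abs_sub_lt 0 (by norm_num : (0 : ℝ) < 1))] with t (ht : t ≠ 0) ht1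
  rw [sub_zero] at ht1
  have taylor := Real.abs_log_sub_add_sum_range_le (x := -t) (by rwa [abs_neg]) 2
  simp only [Finset.sum_range_succ, Finset.sum_range_zero, abs_neg, sub_neg_eq_add] at taylor
  have ht2 : (0 : ℝ) < t ^ 2 := by positivity
  have hslope :
      slope logOneAddDiv 0 t - -(1 / 2) = (-t + t ^ 2 / 2 + Real.log (1 + t)) / t ^ 2 := by
    rw [slope_def_field, logOneAddDiv, logOneAddDiv, if_neg ht, if_pos rfl]
    field_simp
    ring
  rw [Real.norm_eq_abs, hslope, abs_div, abs_of_pos ht2, div_le_iff₀ ht2]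
  calc |-t + t ^ 2 / 2 + Real.log (1 + t)| ≤ |t| ^ 3 / (1 - |t|) := by
        convert taylor using 2; norm_num
    _ = |t| / (1 - |t|) * t ^ 2 := by rw [← sq_abs]; ring

lemma hasDerivAt_logOneAddDiv_mul_zero (a : ℝ) :
    HasDerivAt (fun u => logOneAddDiv (a * u)) (-(1 / 2) * a) 0 := by
  have hL : HasDerivAt logOneAddDiv (-(1 / 2)) (a * 0) := by
    rw [mul_zero]; exact hasDerivAt_logOneAddDiv_zero
  exact hL.comp 0 (by simpa using (hasDerivAt_id (0 : ℝ)).const_mul a)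

/-- `c_n(0,x)` as a function of `u = 1/n`, extended to `u = 0`. -/
noncomputable def cOfInv (x u : ℝ) : ℝ :=
  Real.exp (1 + (1 + u) * (x * logOneAddDiv (x * u) - (1 + x) * logOneAddDiv ((1 + x) * u)))

lemma cOfInv_zero (x : ℝ) : cOfInv x 0 = 1 := by
  simp [cOfInv, logOneAddDiv]

lemma hasDerivAt_cOfInv_zero (x : ℝ) : HasDerivAt (cOfInv x) (x - 1 / 2) 0 := by
  have hψ := ((hasDerivAt_logOneAddDiv_mul_zero x).const_mul x).fun_sub
    ((hasDerivAt_logOneAddDiv_mul_zero (1 + x)).const_mul (1 + x))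
  have h := (((hasDerivAt_id' (0 : ℝ)).const_add 1).fun_mul hψ).const_add 1 |>.exp
  refine h.congr_deriv ?_
  simp [logOneAddDiv]
  ring

lemma cOfInv_inv_natCast (x : ℝ) {n : ℕ} (hn : n ≠ 0) (hnx : 0 < n + x) :
    cOfInv x (n : ℝ)⁻¹ = c n 0 x := by
  have hn' : (n : ℝ) ≠ 0 := Nat.cast_ne_zero.mpr hn
  have hu : (n : ℝ)⁻¹ ≠ 0 := inv_ne_zero hn'
  have hnx1 : 0 < (n : ℝ) + 1 + x := by linarith
  have hlog : Real.log (1 + x * (n : ℝ)⁻¹) - Real.log (1 + (1 + x) * (n : ℝ)⁻¹)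
      = Real.log (((n : ℝ) + x) / ((n : ℝ) + 1 + x)) := by
    have e1 : 1 + x * (n : ℝ)⁻¹ = ((n : ℝ) + x) / n := by field_simp
    have e2 : 1 + (1 + x) * (n : ℝ)⁻¹ = ((n : ℝ) + 1 + x) / n := by field_simp; ring
    rw [e1, e2, ← Real.log_div (by positivity) (by positivity)]
    congr 1
    field_simp
  have hpow : (((n : ℝ) + x) / ((n : ℝ) + 1 + x)) ^ (n + 1)
      = Real.exp (((n : ℝ) + 1) * Real.log (((n : ℝ) + x) / ((n : ℝ) + 1 + x))) := by
    rw [← Real.exp_log (pow_pos (div_pos hnx hnx1) (n + 1)), Real.log_pow]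
    push_cast
    rfl
  rw [cOfInv, mul_logOneAddDiv_mul x hu, mul_logOneAddDiv_mul (1 + x) hu, ← sub_div, hlog, c,
    add_zero, sub_zero, hpow, ← Real.exp_add]
  congr 1
  field_simp
  ring

lemma tendsto_sq_mul_inv_add_two_sub_c_div (x : ℝ) :
    Tendsto (fun n : ℕ => (n : ℝ) ^ 2 * (1 / ((n : ℝ) + 2) - c n 0 x / ((n : ℝ) + x)))
      atTop (𝓝 (-(3 / 2))) := by
  set A : ℝ → ℝ := fun u => (1 + 2 * u)⁻¹ - cOfInv x u / (1 + x * u)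
  have hA : HasDerivAt A (-(3 / 2)) 0 := by
    have h := (((hasDerivAt_id (0 : ℝ)).const_mul 2).const_add 1).fun_inv (by norm_num) |>.sub
      ((hasDerivAt_cOfInv_zero x).div (((hasDerivAt_id (0 : ℝ)).const_mul x).const_add 1)
        (by norm_num))
    refine h.congr_deriv ?_
    rw [cOfInv_zero]
    norm_num
  have hinv : Tendsto (fun n : ℕ => (n : ℝ)⁻¹) atTop (𝓝[≠] 0) :=
    tendsto_nhdsWithin_iff.mpr ⟨tendsto_inv_atTop_zero.comp tendsto_natCast_atTop_atTop,
      (eventually_ne_atTop 0).mono fun n hn => inv_ne_zero (Nat.cast_ne_zero.mpr hn)⟩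
  refine ((hasDerivAt_iff_tendsto_slope.mp hA).comp hinv).congr' ?_
  filter_upwards [eventually_ne_atTop 0,
    tendsto_natCast_atTop_atTop.eventually_gt_atTop (-x)] with n hn hn_gt
  have hnx : 0 < (n : ℝ) + x := by linarith
  have hn' : (n : ℝ) ≠ 0 := Nat.cast_ne_zero.mpr hn
  simp only [Function.comp, slope_def_field, A, cOfInv_inv_natCast x hn hnx, cOfInv_zero]
  field_simp
  ring

theorem lemma4_vii_general (x k : ℝ) :
    Tendsto (fun n : ℕ => (n : ℝ) ^ 2 *
      ((((n : ℝ) + 1 + x) / ((n : ℝ) + 2) * r (n + 1) x k - c n 0 x * r n x k) -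
        (-(3 * k) / 2 * (1 / ((n : ℝ) + 1 + x) ^ 2))))
      atTop (nhds 0) := by
  have hsq : Tendsto (fun n : ℕ => ((n : ℝ) / (n + (1 + x))) ^ 2) atTop (𝓝 1) := by
    simpa using (tendsto_natCast_div_add_atTop (1 + x)).pow 2
  have hlim :=
    ((tendsto_sq_mul_inv_add_two_sub_c_div x).const_mul k).add (hsq.const_mul (3 * k / 2))
  rw [show k * -(3 / 2) + 3 * k / 2 * 1 = 0 by ring] at hlim
  refine hlim.congr' ?_
  filter_upwards [tendsto_natCast_atTop_atTop.eventually_gt_atTop (-x)] with n hn_gt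
  have hnx : 0 < (n : ℝ) + x := by linarith
  have hnx1 : 0 < (n : ℝ) + 1 + x := by linarith
  have hnx1' : 0 < (n : ℝ) + (1 + x) := by linarith
  simp only [r]
  push_cast
  field_simp
  ring

theorem lemma4_vii (x k : ℝ) (hx : x ∈ Set.Ico (0 : ℝ) 1) :
    Tendsto (fun n : ℕ => (n : ℝ) ^ 2 *
      ((((n : ℝ) + 1 + x) / ((n : ℝ) + 2) * r (n + 1) x k - c n 0 x * r n x k) -
        (-(3 * k) / 2 * (1 / ((n : ℝ) + 1 + x) ^ 2))))
      atTop (nhds 0) :=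
  lemma4_vii_general x k
end
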